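/- arXiv:2110.09034 — 8 statements merged into one kernel-verified Lean document; each statement's English description precedes it below -/
import Mathlib

section
/- Let Q = [[0,Q₁],[Q₂,0]] and R = [[0,R₁],[R₂,0]] be 2×2 block anti-diagonal matrices and let M = [[U,V],[W,X]], H = [[A,B],[C,D]] be 2×2 block matrices with compatible block sizes. Then (Q ⊗̲ R)(M ⊗̲ H) = (QM) ⊗̲ (RH). -/
open Matrix Kronecker

/-- The partitioned tensor product of two 2×2 block matrices:
`M ⊗̲ H = [[U⊗A, V⊗B],[W⊗C, X⊗D]]` where `⊗` is the Kronecker product. -/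
noncomputable def ptp {ι₁ ι₂ κ₁ κ₂ α₁ α₂ β₁ β₂ : Type*}
    (M : Matrix (ι₁ ⊕ ι₂) (κ₁ ⊕ κ₂) ℝ) (H : Matrix (α₁ ⊕ α₂) (β₁ ⊕ β₂) ℝ) :
    Matrix ((ι₁ × α₁) ⊕ (ι₂ × α₂)) ((κ₁ × β₁) ⊕ (κ₂ × β₂)) ℝ :=
  Matrix.fromBlocks (M.toBlocks₁₁ ⊗ₖ H.toBlocks₁₁) (M.toBlocks₁₂ ⊗ₖ H.toBlocks₁₂)
    (M.toBlocks₂₁ ⊗ₖ H.toBlocks₂₁) (M.toBlocks₂₂ ⊗ₖ H.toBlocks₂₂)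

/-- Proposition 2.1 (block anti-diagonal case): if `Q = [[0,Q₁],[Q₂,0]]` and `R = [[0,R₁],[R₂,0]]`
are block anti-diagonal matrices, `M = [[U,V],[W,X]]` and `H = [[A,B],[C,D]]`, then
`(Q ⊗̲ R)(M ⊗̲ H) = (QM) ⊗̲ (RH)`. -/
theorem partitioned_tensor_mul_of_block_antidiagonal
    {a' a d' d p' p s' s b c q r : Type*}
    [Fintype a] [Fintype d] [Fintype p] [Fintype s]
    (Q₁ : Matrix a' d ℝ) (Q₂ : Matrix d' a ℝ)
    (R₁ : Matrix p' s ℝ) (R₂ : Matrix s' p ℝ)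
    (U : Matrix a b ℝ) (V : Matrix a c ℝ) (W : Matrix d b ℝ) (X : Matrix d c ℝ)
    (A : Matrix p q ℝ) (B : Matrix p r ℝ) (C : Matrix s q ℝ) (D : Matrix s r ℝ) :
    ptp (Matrix.fromBlocks 0 Q₁ Q₂ 0) (Matrix.fromBlocks 0 R₁ R₂ 0) *
      ptp (Matrix.fromBlocks U V W X) (Matrix.fromBlocks A B C D) =
    ptp ((Matrix.fromBlocks 0 Q₁ Q₂ 0) * (Matrix.fromBlocks U V W X))
      ((Matrix.fromBlocks 0 R₁ R₂ 0) * (Matrix.fromBlocks A B C D)) := by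
  simp [ptp, Matrix.fromBlocks_multiply, Matrix.toBlocks_fromBlocks₁₁, Matrix.toBlocks_fromBlocks₁₂, Matrix.toBlocks_fromBlocks₂₁, Matrix.toBlocks_fromBlocks₂₂, Matrix.mul_kronecker_mul]
end

section
/- Let G be a bipartite graph with adjacency matrix [[0,B],[Bᵀ,0]], with partite sets X and Y induced by this block structure. Then B is permutationally equivalent to its transpose (i.e., there exist permutation matrices P, Q with Qᵀ B P = Bᵀ) if and only if G admits an automorphism f with f(X) = Y and f(Y) = X. -/
open Matrix

/-- The bipartite graph on `ι ⊕ κ` whose biadjacency matrix is `B`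
(adjacency matrix `[[0,B],[Bᵀ,0]]` for a `(0,1)`-matrix `B`). -/
def bip {ι κ : Type*} (B : Matrix ι κ ℝ) : SimpleGraph (ι ⊕ κ) where
  Adj u v :=
    match u, v with
    | Sum.inl i, Sum.inr j => B i j = 1
    | Sum.inr j, Sum.inl i => B i j = 1
    | _, _ => False
  symm := ⟨by rintro (i | j) (i' | j') h <;> simp_all⟩
  loopless := ⟨by rintro (i | j) h <;> simp_all⟩

/-- A rectangular permutation matrix. -/
def IsGPermMatrix {ι κ : Type*} [DecidableEq κ] (P : Matrix ι κ ℝ) : Prop :=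
  ∃ e : ι ≃ κ, ∀ i k, P i k = if e i = k then 1 else 0

lemma toPEquiv_isGPerm {ι κ : Type*} [DecidableEq κ] (e : ι ≃ κ) :
    IsGPermMatrix (e.toPEquiv.toMatrix : Matrix ι κ ℝ) :=
  ⟨e, fun i k => by simp [PEquiv.toMatrix_apply, Equiv.toPEquiv_apply, eq_comm]⟩

lemma key_mul {m n : ℕ} (B : Matrix (Fin m) (Fin n) ℝ) (e : Fin n ≃ Fin m)
    (e' : Fin m ≃ Fin n) (j : Fin n) (i : Fin m) :
    ((e'.toPEquiv.toMatrix : Matrix (Fin m) (Fin n) ℝ)ᵀ * B *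
      (e.toPEquiv.toMatrix : Matrix (Fin n) (Fin m) ℝ)) j i = B (e'.symm j) (e.symm i) := by
  rw [← PEquiv.toMatrix_symm, ← Equiv.toPEquiv_symm, PEquiv.mul_toMatrix_apply,
    ← Equiv.toPEquiv_symm, Equiv.toPEquiv_apply]
  show ((e'.symm.toPEquiv.toMatrix : Matrix (Fin n) (Fin m) ℝ) * B) j (e.symm i) = _
  rw [PEquiv.toMatrix_mul_apply, Equiv.toPEquiv_apply]

/-- The biadjacency matrix `B` is permutationally equivalent to its transpose iff the
bipartite graph with adjacency matrix `[[0,B],[Bᵀ,0]]` admits an automorphism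
interchanging the partite sets `X` and `Y` induced by the block structure. -/
theorem PET_iff_interchanging_automorphism {m n : ℕ}
    (B : Matrix (Fin m) (Fin n) ℝ) (h01 : ∀ i j, B i j = 0 ∨ B i j = 1) :
    (∃ (P : Matrix (Fin n) (Fin m) ℝ) (Q : Matrix (Fin m) (Fin n) ℝ),
        IsGPermMatrix P ∧ IsGPermMatrix Q ∧ Qᵀ * B * P = Bᵀ) ↔
    (∃ f : bip B ≃g bip B,
        (∀ i : Fin m, ∃ j : Fin n, f (Sum.inl i) = Sum.inr j) ∧
        (∀ j : Fin n, ∃ i : Fin m, f (Sum.inr j) = Sum.inl i)) := by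
  constructor
  · rintro ⟨P, Q, ⟨e, hP⟩, ⟨e', hQ⟩, hPQ⟩
    have hP' : P = e.toPEquiv.toMatrix := by
      ext b i; simp [hP, PEquiv.toMatrix_apply, Equiv.toPEquiv_apply, eq_comm]
    have hQ' : Q = e'.toPEquiv.toMatrix := by
      ext a j; simp [hQ, PEquiv.toMatrix_apply, Equiv.toPEquiv_apply, eq_comm]
    have key : ∀ i j, B (e'.symm j) (e.symm i) = B i j := by
      intro i j
      have := congrFun (congrFun hPQ j) i
      rw [hP', hQ', key_mul] at this
      rw [this, transpose_apply]
    let φ : (Fin m ⊕ Fin n) ≃ (Fin m ⊕ Fin n) :=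
      { toFun := fun u => match u with
          | Sum.inl i => Sum.inr (e.symm i)
          | Sum.inr j => Sum.inl (e'.symm j)
        invFun := fun u => match u with
          | Sum.inl i => Sum.inr (e' i)
          | Sum.inr j => Sum.inl (e j)
        left_inv := by rintro (i | j) <;> simp
        right_inv := by rintro (i | j) <;> simp }
    refine ⟨⟨φ, ?_⟩, fun i => ⟨e.symm i, rfl⟩, fun j => ⟨e'.symm j, rfl⟩⟩
    rintro (i | j) (i' | j') <;> simp [φ, bip, key]
  · rintro ⟨f, hX, hY⟩
    choose g hg using hX
    choose h hh using hY
    have hgBij : Function.Bijective g := by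
      constructor
      · intro a b hab
        have : f (Sum.inl a) = f (Sum.inl b) := by rw [hg, hg, hab]
        simpa using f.toEquiv.injective this
      · intro j
        obtain ⟨u, hu⟩ := f.toEquiv.surjective (Sum.inr j)
        cases u with
        | inl i => exact ⟨i, by rw [show f.toEquiv (Sum.inl i) = f (Sum.inl i) from rfl, hg i] at hu; simpa using hu⟩
        | inr j' => rw [show f.toEquiv (Sum.inr j') = f (Sum.inr j') from rfl, hh j'] at hu; simp at hu
    have hhBij : Function.Bijective h := by
      constructor
      · intro a b hab
        have : f (Sum.inr a) = f (Sum.inr b) := by rw [hh, hh, hab]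
        simpa using f.toEquiv.injective this
      · intro i
        obtain ⟨u, hu⟩ := f.toEquiv.surjective (Sum.inl i)
        cases u with
        | inr j => exact ⟨j, by rw [show f.toEquiv (Sum.inr j) = f (Sum.inr j) from rfl, hh j] at hu; simpa using hu⟩
        | inl i' => rw [show f.toEquiv (Sum.inl i') = f (Sum.inl i') from rfl, hg i'] at hu; simp at hu
    let τ : Fin m ≃ Fin n := Equiv.ofBijective g hgBij
    let σ : Fin n ≃ Fin m := Equiv.ofBijective h hhBij
    have hkey : ∀ i j, B (h j) (g i) = B i j := by
      intro i j
      have hiff := f.map_rel_iff (a := Sum.inl i) (b := Sum.inr j)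
      rw [hg, hh] at hiff
      rcases h01 (h j) (g i) with h1 | h1 <;> rcases h01 i j with h2 | h2 <;>
        simp_all [bip]
    refine ⟨τ.symm.toPEquiv.toMatrix, σ.symm.toPEquiv.toMatrix,
      toPEquiv_isGPerm _, toPEquiv_isGPerm _, ?_⟩
    ext j i
    rw [key_mul, transpose_apply]
    simp only [Equiv.symm_symm, σ, τ, Equiv.ofBijective_apply]
    exact hkey i j
end

section
/- Let V be an m×n (0,1)-matrix and B a p×q (0,1)-matrix, and let L = [[0,V],[Vᵀ,0]], H = [[0,B],[Bᵀ,0]], H# = [[0,Bᵀ],[B,0]]. If m = n or p = q, then the matrices L ⊗̲ H = [[0, V⊗B],[Vᵀ⊗Bᵀ, 0]] and L ⊗̲ H# = [[0, V⊗Bᵀ],[Vᵀ⊗B, 0]] are orthogonally similar, hence have the same spectrum (the corresponding bipartite graphs are cospectral for the adjacency matrix). -/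
open Matrix Kronecker Polynomial Filter Topology

section AuxCospectral

variable {k : ℕ}

open scoped MatrixOrder in
private lemma aux_orth_of_unit (S : Matrix (Fin k) (Fin k) ℝ) (hS : IsUnit S.det) :
    ∃ Q : Matrix (Fin k) (Fin k) ℝ, Qᵀ * Q = 1 ∧ Q * S * Q = Sᵀ := by
  have hps : (Sᴴ * S).PosSemidef := Matrix.posSemidef_conjTranspose_mul_self S
  set R : Matrix (Fin k) (Fin k) ℝ := CFC.sqrt (Sᴴ * S) with hRdef
  have hRH : Rᵀ = R := by
    rw [← Matrix.conjTranspose_eq_transpose_of_trivial]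
    exact (CFC.sqrt_nonneg (Sᴴ * S)).posSemidef.1
  have hRR : R * R = Sᵀ * S := by
    rw [← Matrix.conjTranspose_eq_transpose_of_trivial]
    exact CFC.sqrt_mul_sqrt_self _ hps.nonneg
  have hSt : IsUnit Sᵀ.det := by rwa [Matrix.det_transpose]
  have hR : IsUnit R.det := by
    have h : R.det * R.det = Sᵀ.det * S.det := by
      rw [← Matrix.det_mul, hRR, Matrix.det_mul]
    exact isUnit_of_mul_isUnit_left (y := R.det) (by rw [h]; exact hSt.mul hS)
  refine ⟨R⁻¹ * Sᵀ, ?_, ?_⟩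
  · have hQt : (R⁻¹ * Sᵀ)ᵀ = S * R⁻¹ := by
      rw [Matrix.transpose_mul, Matrix.transpose_transpose, Matrix.transpose_nonsing_inv, hRH]
    rw [hQt]
    have h1 : R⁻¹ * R⁻¹ = S⁻¹ * Sᵀ⁻¹ := by
      rw [← Matrix.mul_inv_rev, hRR, Matrix.mul_inv_rev]
    have e1 : S * R⁻¹ * (R⁻¹ * Sᵀ) = S * (R⁻¹ * R⁻¹) * Sᵀ := by
      simp only [Matrix.mul_assoc]
    rw [e1, h1, ← Matrix.mul_assoc, Matrix.mul_nonsing_inv S hS, one_mul,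
      Matrix.nonsing_inv_mul Sᵀ hSt]
  · have e1 : R⁻¹ * Sᵀ * S * (R⁻¹ * Sᵀ) = R⁻¹ * (Sᵀ * S) * R⁻¹ * Sᵀ := by
      simp only [Matrix.mul_assoc]
    rw [e1, ← hRR, ← Matrix.mul_assoc, Matrix.nonsing_inv_mul R hR, one_mul,
      Matrix.mul_nonsing_inv R hR, one_mul]

private lemma aux_eps (S : Matrix (Fin k) (Fin k) ℝ) (j : ℕ) :
    ∃ x : ℝ, 0 < x ∧ x < 1 / (j + 1) ∧ IsUnit (S + x • 1).det := by
  have hne : (-S).charpoly ≠ 0 := (Matrix.charpoly_monic (-S)).ne_zero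
  have hfin : {x : ℝ | ((-S).charpoly).IsRoot x}.Finite := Polynomial.finite_setOf_isRoot hne
  have hioo : (Set.Ioo (0 : ℝ) (1 / (j + 1))).Infinite := Set.Ioo_infinite (by positivity)
  obtain ⟨x, hx⟩ := (hioo.diff hfin).nonempty
  have heval : ((-S).charpoly).eval x = (S + x • 1).det := by
    rw [Matrix.charpoly, show ((charmatrix (-S)).det).eval x
        = (evalRingHom x) ((charmatrix (-S)).det) from rfl, RingHom.map_det]
    congr 1
    ext i j'
    by_cases h : i = j'
    · subst h
      simp [Matrix.add_apply, Matrix.smul_apply, Matrix.one_apply_eq]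
      ring
    · simp [Matrix.charmatrix_apply_ne _ _ _ h, Matrix.add_apply, Matrix.smul_apply,
        Matrix.one_apply_ne h]
  refine ⟨x, hx.1.1, hx.1.2, isUnit_iff_ne_zero.mpr ?_⟩
  rw [← heval]
  exact hx.2

private lemma aux_isCompact_orth :
    IsCompact {Q : Matrix (Fin k) (Fin k) ℝ | Qᵀ * Q = 1} := by
  have hclosed : IsClosed {Q : Matrix (Fin k) (Fin k) ℝ | Qᵀ * Q = 1} :=
    isClosed_eq (Continuous.matrix_mul (continuous_id.matrix_transpose) continuous_id)
      continuous_const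
  refine IsCompact.of_isClosed_subset
    (isCompact_univ_pi fun _ : Fin k => isCompact_univ_pi
      fun _ : Fin k => isCompact_Icc (a := (-1 : ℝ)) (b := 1)) hclosed ?_
  intro Q hQ
  have hdiag : ∀ j, ∑ i, Q i j * Q i j = 1 := by
    intro j
    have h1 : (Qᵀ * Q) j j = (1 : Matrix (Fin k) (Fin k) ℝ) j j := by rw [hQ]
    simpa [Matrix.mul_apply, Matrix.one_apply_eq, Matrix.transpose_apply] using h1
  refine Set.mem_univ_pi.mpr fun i => Set.mem_univ_pi.mpr fun j => ?_
  have hle : Q i j * Q i j ≤ 1 := by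
    rw [← hdiag j]
    exact Finset.single_le_sum (f := fun i' => Q i' j * Q i' j)
      (fun i' _ => mul_self_nonneg _) (Finset.mem_univ i)
  exact Set.mem_Icc.mpr (abs_le.mp (abs_le_one_iff_mul_self_le_one.mpr hle))

private lemma exists_orth_conj_transpose (S : Matrix (Fin k) (Fin k) ℝ) :
    ∃ Q : Matrix (Fin k) (Fin k) ℝ, Qᵀ * Q = 1 ∧ Q * Qᵀ = 1 ∧ Q * S * Q = Sᵀ := by
  choose eps heps1 heps2 heps3 using aux_eps S
  set T : ℕ → Matrix (Fin k) (Fin k) ℝ := fun j => S + eps j • 1 with hT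
  choose Qs hQs1 hQs2 using fun j => aux_orth_of_unit (T j) (heps3 j)
  letI : FirstCountableTopology (Matrix (Fin k) (Fin k) ℝ) :=
    inferInstanceAs (FirstCountableTopology ((Fin k) → (Fin k) → ℝ))
  obtain ⟨Q, hQK, φ, hφ, hlim⟩ := aux_isCompact_orth.tendsto_subseq (x := Qs) fun j => hQs1 j
  have hε0 : Tendsto eps atTop (𝓝 0) :=
    squeeze_zero (fun j => (heps1 j).le) (fun j => (heps2 j).le)
      tendsto_one_div_add_atTop_nhds_zero_nat
  have hTlim : Tendsto T atTop (𝓝 S) := by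
    have h0 : Tendsto (fun j => eps j • (1 : Matrix (Fin k) (Fin k) ℝ)) atTop
        (𝓝 (0 : Matrix (Fin k) (Fin k) ℝ)) := by
      simpa using hε0.smul_const (1 : Matrix (Fin k) (Fin k) ℝ)
    simpa using tendsto_const_nhds.add h0
  have hTφ : Tendsto (T ∘ φ) atTop (𝓝 S) := hTlim.comp hφ.tendsto_atTop
  have h1 : Tendsto (fun j => Qs (φ j) * T (φ j) * Qs (φ j)) atTop (𝓝 (Q * S * Q)) :=
    (hlim.mul hTφ).mul hlim
  have h2 : Tendsto (fun j => (T (φ j))ᵀ) atTop (𝓝 Sᵀ) :=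
    ((continuous_id.matrix_transpose).tendsto S).comp hTφ
  have heq : (fun j => Qs (φ j) * T (φ j) * Qs (φ j)) = fun j => (T (φ j))ᵀ :=
    funext fun j => hQs2 (φ j)
  rw [heq] at h1
  exact ⟨Q, hQK, mul_eq_one_comm.mp hQK, tendsto_nhds_unique h1 h2⟩

private lemma aux_charpoly_conj {I : Type*} [Fintype I] [DecidableEq I]
    (A P : Matrix I I ℝ) (h1 : Pᵀ * P = 1) : (Pᵀ * A * P).charpoly = A.charpoly := by
  have hdet : Pᵀ.det * P.det = 1 := by rw [← Matrix.det_mul, h1, Matrix.det_one]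
  have hmap1 : (Pᵀ.map (C : ℝ →+* ℝ[X])) * (P.map C) = 1 := by
    rw [← Matrix.map_mul, h1]
    ext i j
    by_cases h : i = j <;> simp [Matrix.one_apply, h]
  have key : charmatrix (Pᵀ * A * P) = (Pᵀ.map (C : ℝ →+* ℝ[X])) * charmatrix A * (P.map C) := by
    unfold charmatrix
    rw [Matrix.mul_sub, Matrix.sub_mul]
    congr 1
    · symm
      rw [Matrix.mul_assoc,
        (Matrix.scalar_commute (X : ℝ[X]) (fun r => Commute.all _ _) (P.map C)).eq,
        ← Matrix.mul_assoc, hmap1, one_mul]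
    · simp only [RingHom.mapMatrix_apply]
      rw [Matrix.map_mul, Matrix.map_mul]
  have hd1 : (Pᵀ.map (C : ℝ →+* ℝ[X])).det = C Pᵀ.det :=
    (RingHom.map_det (C : ℝ →+* ℝ[X]) Pᵀ).symm
  have hd2 : (P.map (C : ℝ →+* ℝ[X])).det = C P.det :=
    (RingHom.map_det (C : ℝ →+* ℝ[X]) P).symm
  rw [Matrix.charpoly, Matrix.charpoly, key, Matrix.det_mul, Matrix.det_mul, hd1, hd2]
  calc C Pᵀ.det * (charmatrix A).det * C P.det
      = (C Pᵀ.det * C P.det) * (charmatrix A).det := by ring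
    _ = (charmatrix A).det := by rw [← C_mul, hdet, Polynomial.C_1, one_mul]

end AuxCospectral

/-- Theorem 3.1 (cospectrality for adjacency matrices, sufficiency): if `m = n` or
`p = q`, then `L ⊗̲ H = [[0, V⊗B],[Vᵀ⊗Bᵀ, 0]]` and `L ⊗̲ H# = [[0, V⊗Bᵀ],[Vᵀ⊗B, 0]]`
are orthogonally similar, hence cospectral (equal characteristic polynomials). -/
theorem cospectral_adjacency_of_balanced {m n p q : ℕ}
    (V : Matrix (Fin m) (Fin n) ℝ) (B : Matrix (Fin p) (Fin q) ℝ)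
    (hV01 : ∀ i j, V i j = 0 ∨ V i j = 1) (hB01 : ∀ i j, B i j = 0 ∨ B i j = 1)
    (h : m = n ∨ p = q) :
    (∃ P : Matrix ((Fin m × Fin p) ⊕ (Fin n × Fin q)) ((Fin m × Fin q) ⊕ (Fin n × Fin p)) ℝ,
      Pᵀ * P = 1 ∧ P * Pᵀ = 1 ∧
      Pᵀ * (Matrix.fromBlocks 0 (V ⊗ₖ B) (Vᵀ ⊗ₖ Bᵀ) 0) * P =
        Matrix.fromBlocks 0 (V ⊗ₖ Bᵀ) (Vᵀ ⊗ₖ B) 0) ∧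
    (Matrix.fromBlocks 0 (V ⊗ₖ B) (Vᵀ ⊗ₖ Bᵀ) (0 : Matrix (Fin n × Fin q) (Fin n × Fin q) ℝ)).charpoly =
      (Matrix.fromBlocks 0 (V ⊗ₖ Bᵀ) (Vᵀ ⊗ₖ B) (0 : Matrix (Fin n × Fin p) (Fin n × Fin p) ℝ)).charpoly := by
  rcases h with h | h
  · -- m = n
    subst h
    obtain ⟨Q, hQ1, hQ2, hQ3⟩ := exists_orth_conj_transpose V
    have hQ4 : Qᵀ * Vᵀ * Qᵀ = V := by
      have h := congrArg Matrix.transpose hQ3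
      simp only [Matrix.transpose_mul, Matrix.transpose_transpose] at h
      rw [Matrix.mul_assoc]
      exact h
    constructor
    · refine ⟨Matrix.fromBlocks 0 (Qᵀ ⊗ₖ (1 : Matrix (Fin p) (Fin p) ℝ))
        (Q ⊗ₖ (1 : Matrix (Fin q) (Fin q) ℝ)) 0, ?_, ?_, ?_⟩
      · simp only [Matrix.fromBlocks_transpose, Matrix.transpose_zero,
          ← Matrix.kroneckerMap_transpose, Matrix.transpose_one, Matrix.transpose_transpose,
          Matrix.fromBlocks_multiply, Matrix.mul_zero, Matrix.zero_mul, add_zero, zero_add,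
          ← Matrix.mul_kronecker_mul, hQ1, hQ2, Matrix.one_mul, Matrix.one_kronecker_one,
          Matrix.fromBlocks_one]
      · simp only [Matrix.fromBlocks_transpose, Matrix.transpose_zero,
          ← Matrix.kroneckerMap_transpose, Matrix.transpose_one, Matrix.transpose_transpose,
          Matrix.fromBlocks_multiply, Matrix.mul_zero, Matrix.zero_mul, add_zero, zero_add,
          ← Matrix.mul_kronecker_mul, hQ1, hQ2, Matrix.one_mul, Matrix.one_kronecker_one,
          Matrix.fromBlocks_one]
      · have e1 : (Qᵀ ⊗ₖ (1 : Matrix (Fin q) (Fin q) ℝ)) * (Vᵀ ⊗ₖ Bᵀ)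
            * (Qᵀ ⊗ₖ (1 : Matrix (Fin p) (Fin p) ℝ)) = V ⊗ₖ Bᵀ := by
          rw [← Matrix.mul_kronecker_mul, ← Matrix.mul_kronecker_mul, hQ4, Matrix.one_mul,
            Matrix.mul_one]
        have e2 : (Q ⊗ₖ (1 : Matrix (Fin p) (Fin p) ℝ)) * (V ⊗ₖ B)
            * (Q ⊗ₖ (1 : Matrix (Fin q) (Fin q) ℝ)) = Vᵀ ⊗ₖ B := by
          rw [← Matrix.mul_kronecker_mul, ← Matrix.mul_kronecker_mul, hQ3, Matrix.one_mul,
            Matrix.mul_one]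
        simp only [Matrix.fromBlocks_transpose, Matrix.transpose_zero,
          ← Matrix.kroneckerMap_transpose, Matrix.transpose_one, Matrix.transpose_transpose,
          Matrix.fromBlocks_multiply, Matrix.mul_zero, Matrix.zero_mul, add_zero, zero_add,
          e1, e2]
    · -- charpoly part
      set P₀ : Matrix ((Fin m × Fin p) ⊕ (Fin m × Fin q)) ((Fin m × Fin p) ⊕ (Fin m × Fin q)) ℝ :=
        Matrix.fromBlocks (Qᵀ ⊗ₖ (1 : Matrix (Fin p) (Fin p) ℝ)) 0 0
          (Q ⊗ₖ (1 : Matrix (Fin q) (Fin q) ℝ)) with hP₀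
      have hP₀orth : P₀ᵀ * P₀ = 1 := by
        rw [hP₀]
        simp only [Matrix.fromBlocks_transpose, Matrix.transpose_zero,
          ← Matrix.kroneckerMap_transpose, Matrix.transpose_one, Matrix.transpose_transpose,
          Matrix.fromBlocks_multiply, Matrix.mul_zero, Matrix.zero_mul, add_zero, zero_add,
          ← Matrix.mul_kronecker_mul, hQ1, hQ2, Matrix.one_mul, Matrix.one_kronecker_one,
          Matrix.fromBlocks_one]
      have hconj : P₀ᵀ * (Matrix.fromBlocks 0 (V ⊗ₖ B) (Vᵀ ⊗ₖ Bᵀ) 0) * P₀ =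
          Matrix.fromBlocks 0 (Vᵀ ⊗ₖ B) (V ⊗ₖ Bᵀ) 0 := by
        have e1 : (Q ⊗ₖ (1 : Matrix (Fin p) (Fin p) ℝ)) * (V ⊗ₖ B)
            * (Q ⊗ₖ (1 : Matrix (Fin q) (Fin q) ℝ)) = Vᵀ ⊗ₖ B := by
          rw [← Matrix.mul_kronecker_mul, ← Matrix.mul_kronecker_mul, hQ3, Matrix.one_mul,
            Matrix.mul_one]
        have e2 : (Qᵀ ⊗ₖ (1 : Matrix (Fin q) (Fin q) ℝ)) * (Vᵀ ⊗ₖ Bᵀ)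
            * (Qᵀ ⊗ₖ (1 : Matrix (Fin p) (Fin p) ℝ)) = V ⊗ₖ Bᵀ := by
          rw [← Matrix.mul_kronecker_mul, ← Matrix.mul_kronecker_mul, hQ4, Matrix.one_mul,
            Matrix.mul_one]
        rw [hP₀]
        simp only [Matrix.fromBlocks_transpose, Matrix.transpose_zero,
          ← Matrix.kroneckerMap_transpose, Matrix.transpose_one, Matrix.transpose_transpose,
          Matrix.fromBlocks_multiply, Matrix.mul_zero, Matrix.zero_mul, add_zero, zero_add,
          e1, e2]
      have hswap : (Matrix.reindex (Equiv.sumComm (Fin m × Fin q) (Fin m × Fin p))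
            (Equiv.sumComm (Fin m × Fin q) (Fin m × Fin p))
            (Matrix.fromBlocks 0 (V ⊗ₖ Bᵀ) (Vᵀ ⊗ₖ B)
              (0 : Matrix (Fin m × Fin p) (Fin m × Fin p) ℝ))) =
          Matrix.fromBlocks 0 (Vᵀ ⊗ₖ B) (V ⊗ₖ Bᵀ) 0 := by
        simp [Matrix.reindex_apply, Matrix.fromBlocks_submatrix_sum_swap_sum_swap]
      calc (Matrix.fromBlocks 0 (V ⊗ₖ B) (Vᵀ ⊗ₖ Bᵀ)
              (0 : Matrix (Fin m × Fin q) (Fin m × Fin q) ℝ)).charpoly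
          = (P₀ᵀ * (Matrix.fromBlocks 0 (V ⊗ₖ B) (Vᵀ ⊗ₖ Bᵀ) 0) * P₀).charpoly :=
            (aux_charpoly_conj _ P₀ hP₀orth).symm
        _ = (Matrix.fromBlocks 0 (Vᵀ ⊗ₖ B) (V ⊗ₖ Bᵀ) 0).charpoly := by rw [hconj]
        _ = _ := by
            rw [← hswap, Matrix.charpoly_reindex]
  · -- p = q
    subst h
    obtain ⟨Q, hQ1, hQ2, hQ3⟩ := exists_orth_conj_transpose B
    have hQ4 : Qᵀ * Bᵀ * Qᵀ = B := by
      have h := congrArg Matrix.transpose hQ3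
      simp only [Matrix.transpose_mul, Matrix.transpose_transpose] at h
      rw [Matrix.mul_assoc]
      exact h
    have e1 : ((1 : Matrix (Fin m) (Fin m) ℝ) ⊗ₖ Q) * (V ⊗ₖ B)
        * ((1 : Matrix (Fin n) (Fin n) ℝ) ⊗ₖ Q) = V ⊗ₖ Bᵀ := by
      rw [← Matrix.mul_kronecker_mul, ← Matrix.mul_kronecker_mul, hQ3, Matrix.one_mul,
        Matrix.mul_one]
    have e2 : ((1 : Matrix (Fin n) (Fin n) ℝ) ⊗ₖ Qᵀ) * (Vᵀ ⊗ₖ Bᵀ)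
        * ((1 : Matrix (Fin m) (Fin m) ℝ) ⊗ₖ Qᵀ) = Vᵀ ⊗ₖ B := by
      rw [← Matrix.mul_kronecker_mul, ← Matrix.mul_kronecker_mul, hQ4, Matrix.one_mul,
        Matrix.mul_one]
    have hPorth : (Matrix.fromBlocks ((1 : Matrix (Fin m) (Fin m) ℝ) ⊗ₖ Qᵀ) 0 0
          ((1 : Matrix (Fin n) (Fin n) ℝ) ⊗ₖ Q))ᵀ *
        (Matrix.fromBlocks ((1 : Matrix (Fin m) (Fin m) ℝ) ⊗ₖ Qᵀ) 0 0
          ((1 : Matrix (Fin n) (Fin n) ℝ) ⊗ₖ Q)) = 1 := by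
      simp only [Matrix.fromBlocks_transpose, Matrix.transpose_zero,
        ← Matrix.kroneckerMap_transpose, Matrix.transpose_one, Matrix.transpose_transpose,
        Matrix.fromBlocks_multiply, Matrix.mul_zero, Matrix.zero_mul, add_zero, zero_add,
        ← Matrix.mul_kronecker_mul, hQ1, hQ2, Matrix.one_mul, Matrix.one_kronecker_one,
        Matrix.fromBlocks_one]
    have hconj : (Matrix.fromBlocks ((1 : Matrix (Fin m) (Fin m) ℝ) ⊗ₖ Qᵀ) 0 0
          ((1 : Matrix (Fin n) (Fin n) ℝ) ⊗ₖ Q))ᵀ *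
        (Matrix.fromBlocks 0 (V ⊗ₖ B) (Vᵀ ⊗ₖ Bᵀ) 0) *
        (Matrix.fromBlocks ((1 : Matrix (Fin m) (Fin m) ℝ) ⊗ₖ Qᵀ) 0 0
          ((1 : Matrix (Fin n) (Fin n) ℝ) ⊗ₖ Q)) =
        Matrix.fromBlocks 0 (V ⊗ₖ Bᵀ) (Vᵀ ⊗ₖ B) 0 := by
      simp only [Matrix.fromBlocks_transpose, Matrix.transpose_zero,
        ← Matrix.kroneckerMap_transpose, Matrix.transpose_one, Matrix.transpose_transpose,
        Matrix.fromBlocks_multiply, Matrix.mul_zero, Matrix.zero_mul, add_zero, zero_add,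
        e1, e2]
    constructor
    · refine ⟨_, hPorth, ?_, hconj⟩
      simp only [Matrix.fromBlocks_transpose, Matrix.transpose_zero,
        ← Matrix.kroneckerMap_transpose, Matrix.transpose_one, Matrix.transpose_transpose,
        Matrix.fromBlocks_multiply, Matrix.mul_zero, Matrix.zero_mul, add_zero, zero_add,
        ← Matrix.mul_kronecker_mul, hQ1, hQ2, Matrix.one_mul, Matrix.one_kronecker_one,
        Matrix.fromBlocks_one]
    · rw [← hconj]
      exact (aux_charpoly_conj _ _ hPorth).symm
end

section
/- Let G₁ and G₂ be bipartite graphs with no isolated vertices, with adjacency matrices A(G₁), A(G₂) partitioned as 2×2 block matrices conformally with the partite sets (so the diagonal blocks are zero), and normalized Laplacians L(Gᵢ) = I − D(Gᵢ)^{−1/2} A(Gᵢ) D(Gᵢ)^{−1/2} partitioned likewise. Then the normalized Laplacian of the graph whose adjacency matrix is A(G₁) ⊗̲ A(G₂) equals 2I − (L(G₁) ⊗̲ L(G₂)). -/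
open Matrix Kronecker

/-- The normalized Laplacian `I − D^{−1/2} A D^{−1/2}` of the graph with adjacency
matrix `A` (with `D` the diagonal matrix of row sums, i.e. degrees). -/
noncomputable def nlap {ι : Type*} [Fintype ι] [DecidableEq ι] (A : Matrix ι ι ℝ) :
    Matrix ι ι ℝ :=
  1 - (Matrix.diagonal fun i => (Real.sqrt (∑ j, A i j))⁻¹) * A *
    (Matrix.diagonal fun i => (Real.sqrt (∑ j, A i j))⁻¹)

/-- Lemma 3.2: for bipartite graphs `G₁`, `G₂` without isolated vertices, with
adjacency matrices `A₁ = [[0,V],[Vᵀ,0]]` and `A₂ = [[0,B],[Bᵀ,0]]` partitioned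
conformally with the partite sets, the normalized Laplacian of the graph with
adjacency matrix `A₁ ⊗̲ A₂` equals `2I − (L(G₁) ⊗̲ L(G₂))`. -/
theorem nlap_ptp {m n p q : ℕ}
    (V : Matrix (Fin m) (Fin n) ℝ) (B : Matrix (Fin p) (Fin q) ℝ)
    (hV01 : ∀ i j, V i j = 0 ∨ V i j = 1) (hB01 : ∀ i j, B i j = 0 ∨ B i j = 1)
    (hVr : ∀ i, ∃ j, V i j = 1) (hVc : ∀ j, ∃ i, V i j = 1)
    (hBr : ∀ i, ∃ j, B i j = 1) (hBc : ∀ j, ∃ i, B i j = 1) :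
    nlap (ptp (Matrix.fromBlocks 0 V Vᵀ 0) (Matrix.fromBlocks 0 B Bᵀ 0)) =
      (2 : ℝ) • 1 -
        ptp (nlap (Matrix.fromBlocks 0 V Vᵀ 0)) (nlap (Matrix.fromBlocks 0 B Bᵀ 0)) := by
  have hVnn : ∀ i, 0 ≤ ∑ j, V i j := fun i => Finset.sum_nonneg fun j _ => by
    rcases hV01 i j with h|h <;> simp [h]
  have hVcnn : ∀ j, 0 ≤ ∑ i, V i j := fun j => Finset.sum_nonneg fun i _ => by
    rcases hV01 i j with h|h <;> simp [h]
  have hA1l : ∀ i : Fin m, ∑ y, (Matrix.fromBlocks 0 V Vᵀ 0) (Sum.inl i) y = ∑ j, V i j :=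
    fun i => by simp [Fintype.sum_sum_type]
  have hA1r : ∀ j : Fin n, ∑ y, (Matrix.fromBlocks 0 V Vᵀ 0) (Sum.inr j) y = ∑ i, V i j :=
    fun j => by simp [Fintype.sum_sum_type, Matrix.transpose_apply]
  have hA2l : ∀ a : Fin p, ∑ y, (Matrix.fromBlocks 0 B Bᵀ 0) (Sum.inl a) y = ∑ b, B a b :=
    fun a => by simp [Fintype.sum_sum_type]
  have hA2r : ∀ b : Fin q, ∑ y, (Matrix.fromBlocks 0 B Bᵀ 0) (Sum.inr b) y = ∑ a, B a b :=
    fun b => by simp [Fintype.sum_sum_type, Matrix.transpose_apply]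
  have hPl : ∀ (i : Fin m) (a : Fin p),
      ∑ y, (ptp (Matrix.fromBlocks 0 V Vᵀ 0) (Matrix.fromBlocks 0 B Bᵀ 0)) (Sum.inl (i,a)) y
        = (∑ j, V i j) * (∑ b, B a b) := fun i a => by
    simp [ptp, Fintype.sum_sum_type, Fintype.sum_prod_type, Finset.mul_sum, Finset.sum_mul]
    rw [Finset.sum_comm]
  have hPr : ∀ (j : Fin n) (b : Fin q),
      ∑ y, (ptp (Matrix.fromBlocks 0 V Vᵀ 0) (Matrix.fromBlocks 0 B Bᵀ 0)) (Sum.inr (j,b)) y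
        = (∑ i, V i j) * (∑ a, B a b) := fun j b => by
    simp [ptp, Fintype.sum_sum_type, Fintype.sum_prod_type, Finset.mul_sum, Finset.sum_mul]
    rw [Finset.sum_comm]
  have hs : ∀ x y : ℝ, 0 ≤ x → (Real.sqrt (x*y))⁻¹ = (Real.sqrt x)⁻¹ * (Real.sqrt y)⁻¹ :=
    fun x y hx => by rw [Real.sqrt_mul hx, mul_inv]
  ext x y
  obtain ⟨i,a⟩|⟨i,a⟩ := x <;> obtain ⟨j,b⟩|⟨j,b⟩ := y <;>
    simp only [Matrix.sub_apply, Matrix.smul_apply, smul_eq_mul, nlap, Matrix.mul_diagonal,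
      Matrix.diagonal_mul, hPl, hPr] <;>
    simp only [ptp, Matrix.fromBlocks_apply₁₁, Matrix.fromBlocks_apply₁₂,
      Matrix.fromBlocks_apply₂₁, Matrix.fromBlocks_apply₂₂, Matrix.toBlocks₁₁,
      Matrix.toBlocks₁₂, Matrix.toBlocks₂₁, Matrix.toBlocks₂₂, Matrix.kroneckerMap_apply,
      Matrix.of_apply, hA1l, hA1r, hA2l, hA2r, Matrix.zero_apply, Matrix.transpose_apply,
      Matrix.mul_diagonal, Matrix.diagonal_mul, mul_zero, zero_mul, sub_zero]
  · by_cases hij : i = j <;> by_cases hab : a = b <;>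
      simp [Matrix.one_apply, hij, hab, Prod.ext_iff] <;> ring
  · rw [hs _ _ (hVnn i), hs _ _ (hVcnn j)]; simp [Matrix.one_apply]; ring
  · rw [hs _ _ (hVcnn i), hs _ _ (hVnn j)]; simp [Matrix.one_apply]; ring
  · by_cases hij : i = j <;> by_cases hab : a = b <;>
      simp [Matrix.one_apply, hij, hab, Prod.ext_iff] <;> ring
end

section
/- Let G_L and G_H be bipartite graphs with no isolated vertices and biadjacency matrices V (m×n) and B (p×q). If m = n or p = q, then the normalized Laplacian matrices of the graphs with adjacency matrices L ⊗̲ H = [[0, V⊗B],[Vᵀ⊗Bᵀ, 0]] and L ⊗̲ H# = [[0, V⊗Bᵀ],[Vᵀ⊗B, 0]] are orthogonally similar, hence the two graphs are cospectral for the normalized Laplacian. -/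
open Matrix Kronecker

open scoped MatrixOrder

lemma aux_orth_conj_of_det_ne {k : ℕ} (X : Matrix (Fin k) (Fin k) ℝ) (hd : X.det ≠ 0) :
    ∃ O : Matrix (Fin k) (Fin k) ℝ, Oᵀ * O = 1 ∧ Oᵀ * X * Oᵀ = Xᵀ := by
  have hPS : (Xᵀ * X).PosSemidef := by
    have := Matrix.posSemidef_conjTranspose_mul_self X
    rwa [Matrix.conjTranspose_eq_transpose_of_trivial] at this
  set P := CFC.sqrt (Xᵀ * X) with hPdef
  have hP2 : P * P = Xᵀ * X := CFC.sqrt_mul_sqrt_self _ hPS.nonneg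
  have hPsymm : Pᵀ = P := by
    have h := (CFC.sqrt_nonneg (Xᵀ * X)).posSemidef.isHermitian
    rw [Matrix.IsHermitian, Matrix.conjTranspose_eq_transpose_of_trivial] at h
    exact h
  have hdP : IsUnit P.det := by
    have h2 : P.det * P.det = X.det * X.det := by
      have := congrArg Matrix.det hP2
      simpa [Matrix.det_mul, Matrix.det_transpose] using this
    refine isUnit_iff_ne_zero.mpr fun h0 => ?_
    rw [h0, mul_zero] at h2
    exact hd (by nlinarith [h2])
  have hXP : X * P⁻¹ * P = X := by
    rw [Matrix.mul_assoc, Matrix.nonsing_inv_mul _ hdP, Matrix.mul_one]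
  have hOO : (X * P⁻¹)ᵀ * (X * P⁻¹) = 1 := by
    rw [Matrix.transpose_mul, Matrix.transpose_nonsing_inv, hPsymm]
    rw [show P⁻¹ * Xᵀ * (X * P⁻¹) = P⁻¹ * (Xᵀ * X) * P⁻¹ by noncomm_ring, ← hP2]
    rw [show P⁻¹ * (P * P) * P⁻¹ = (P⁻¹ * P) * (P * P⁻¹) by noncomm_ring]
    rw [Matrix.nonsing_inv_mul _ hdP, Matrix.one_mul, Matrix.mul_nonsing_inv _ hdP]
  refine ⟨X * P⁻¹, hOO, ?_⟩
  set O := X * P⁻¹ with hOdef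
  calc Oᵀ * X * Oᵀ = Oᵀ * (O * P) * Oᵀ := by rw [hXP]
    _ = (Oᵀ * O) * (P * Oᵀ) := by noncomm_ring
    _ = P * Oᵀ := by rw [hOO, Matrix.one_mul]
    _ = Xᵀ := by rw [← hXP]; simp [hOdef, Matrix.transpose_mul, Matrix.transpose_nonsing_inv, hPsymm, Matrix.mul_assoc]

lemma aux_eval_det {k : ℕ} (M : Matrix (Fin k) (Fin k) ℝ) (ε : ℝ) :
    ((-M).charpoly).eval ε = (M + ε • 1).det := by
  rw [Matrix.charpoly]
  rw [show (Polynomial.eval ε ((Matrix.charmatrix (-M)).det)) =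
      Polynomial.evalRingHom ε ((Matrix.charmatrix (-M)).det) from rfl]
  rw [RingHom.map_det]
  congr 1
  ext i j
  by_cases h : i = j
  · subst h
    simp [Matrix.charmatrix_apply, Matrix.one_apply, add_comm]
  · simp [Matrix.charmatrix_apply, Matrix.one_apply, h, Matrix.diagonal_apply_ne _ h]

lemma aux_orth_set_compact {k : ℕ} :
    IsCompact {O : Matrix (Fin k) (Fin k) ℝ | Oᵀ * O = 1} := by
  have hK : IsCompact (Set.univ.pi fun _ : Fin k =>
      (Set.univ.pi fun _ : Fin k => Set.Icc (-1 : ℝ) 1)) :=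
    isCompact_univ_pi fun _ => isCompact_univ_pi fun _ => isCompact_Icc
  have hclosed : IsClosed {O : Matrix (Fin k) (Fin k) ℝ | Oᵀ * O = 1} := by
    have hc : Continuous fun O : Matrix (Fin k) (Fin k) ℝ => Oᵀ * O :=
      (continuous_id.matrix_transpose).matrix_mul continuous_id
    exact isClosed_singleton.preimage hc
  refine hK.of_isClosed_subset hclosed ?_
  intro O hO
  intro i _ j _
  simp only [Set.mem_Icc]
  have h1 : ∑ l, O l j * O l j = 1 := by
    have := congrFun (congrFun (show (Matrix.of O)ᵀ * Matrix.of O = 1 from hO) j) j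
    simpa [Matrix.mul_apply, Matrix.one_apply] using this
  have h2 : O i j * O i j ≤ 1 := by
    rw [← h1]
    exact Finset.single_le_sum (f := fun l => O l j * O l j)
      (fun l _ => mul_self_nonneg _) (Finset.mem_univ i)
  constructor <;> nlinarith [mul_self_nonneg (O i j)]

set_option maxHeartbeats 1000000 in
lemma aux_orth_conj {k : ℕ} (X : Matrix (Fin k) (Fin k) ℝ) :
    ∃ O : Matrix (Fin k) (Fin k) ℝ, Oᵀ * O = 1 ∧ O * Oᵀ = 1 ∧ Oᵀ * X * Oᵀ = Xᵀ := by
  -- choose a sequence of perturbations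
  have hroots : {t : ℝ | ((-X).charpoly).IsRoot t}.Finite :=
    Polynomial.finite_setOf_isRoot (Matrix.charpoly_monic (-X)).ne_zero
  have hsel : ∀ j : ℕ, ∃ ε : ℝ, ε ∈ Set.Ioo (0:ℝ) (1/(j+1)) ∧
      (X + ε • 1).det ≠ 0 := by
    intro j
    have hinf : (Set.Ioo (0:ℝ) (1/(j+1))).Infinite :=
      Set.Ioo_infinite (by positivity)
    obtain ⟨ε, hε⟩ := (hinf.diff hroots).nonempty
    refine ⟨ε, hε.1, ?_⟩
    rw [← aux_eval_det]
    exact hε.2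
  choose ε hε hdet using hsel
  have hε0 : Filter.Tendsto ε Filter.atTop (nhds 0) := by
    have h1 : Filter.Tendsto (fun j : ℕ => 1/((j:ℝ)+1)) Filter.atTop (nhds 0) :=
      tendsto_one_div_add_atTop_nhds_zero_nat
    refine squeeze_zero (fun j => (hε j).1.le) (fun j => (hε j).2.le) h1
  set Y : ℕ → Matrix (Fin k) (Fin k) ℝ := fun j => X + ε j • 1 with hYdef
  have hYlim : Filter.Tendsto Y Filter.atTop (nhds X) := by
    have : Filter.Tendsto (fun j => ε j • (1 : Matrix (Fin k) (Fin k) ℝ))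
        Filter.atTop (nhds ((0:ℝ) • 1)) := hε0.smul_const _
    simpa using (tendsto_const_nhds (x := X)).add this
  have hO : ∀ j, ∃ O : Matrix (Fin k) (Fin k) ℝ, Oᵀ * O = 1 ∧ Oᵀ * Y j * Oᵀ = (Y j)ᵀ :=
    fun j => aux_orth_conj_of_det_ne (Y j) (hdet j)
  choose O hO1 hO2 using hO
  haveI : FirstCountableTopology (Matrix (Fin k) (Fin k) ℝ) :=
    inferInstanceAs (FirstCountableTopology (Fin k → Fin k → ℝ))
  obtain ⟨L, hLmem, φ, hφ, hOlim⟩ := aux_orth_set_compact.tendsto_subseq hO1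
  refine ⟨L, hLmem, mul_eq_one_comm.mp hLmem, ?_⟩
  have hYφ : Filter.Tendsto (Y ∘ φ) Filter.atTop (nhds X) :=
    hYlim.comp hφ.tendsto_atTop
  have hOT : Filter.Tendsto (fun j => (O (φ j))ᵀ) Filter.atTop (nhds Lᵀ) :=
    ((continuous_id.matrix_transpose).tendsto _).comp hOlim
  have hlhs : Filter.Tendsto (fun j => (O (φ j))ᵀ * Y (φ j) * (O (φ j))ᵀ)
      Filter.atTop (nhds (Lᵀ * X * Lᵀ)) :=
    (hOT.mul hYφ).mul hOT
  have hrhs : Filter.Tendsto (fun j => (Y (φ j))ᵀ) Filter.atTop (nhds Xᵀ) :=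
    ((continuous_id.matrix_transpose).tendsto _).comp hYφ
  have heq : (fun j => (O (φ j))ᵀ * Y (φ j) * (O (φ j))ᵀ) = fun j => (Y (φ j))ᵀ := by
    funext j; exact hO2 (φ j)
  rw [heq] at hlhs
  exact tendsto_nhds_unique hlhs hrhs

lemma aux_charpoly_conj_s8 {κ : Type*} [Fintype κ] [DecidableEq κ]
    (Q M : Matrix κ κ ℝ) (hQ : Qᵀ * Q = 1) :
    (Qᵀ * M * Q).charpoly = M.charpoly := by
  set Q' : Matrix κ κ (Polynomial ℝ) := Q.map Polynomial.C with hQ'def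
  have hmap : ∀ (A B : Matrix κ κ ℝ), (A * B).map (Polynomial.C : ℝ →+* Polynomial ℝ)
      = A.map Polynomial.C * B.map Polynomial.C := fun A B => Matrix.map_mul
  have hQ'orth : Q'ᵀ * Q' = 1 := by
    rw [hQ'def, ← Matrix.transpose_map, ← hmap, hQ]
    simp
  have hkey : Matrix.charmatrix (Qᵀ * M * Q) = Q'ᵀ * Matrix.charmatrix M * Q' := by
    rw [Matrix.charmatrix]
    rw [Matrix.charmatrix]
    rw [RingHom.mapMatrix_apply, RingHom.mapMatrix_apply]
    rw [Matrix.mul_sub, Matrix.sub_mul]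
    congr 1
    · rw [Matrix.scalar_apply, ← Matrix.smul_one_eq_diagonal, Matrix.mul_smul,
        Matrix.smul_mul, Matrix.mul_one, hQ'orth, Matrix.smul_one_eq_diagonal]
    · rw [show (Qᵀ * M * Q).map (Polynomial.C : ℝ →+* Polynomial ℝ) =
        Qᵀ.map Polynomial.C * M.map Polynomial.C * Q.map Polynomial.C by
          rw [← hmap, ← hmap]]
      rw [hQ'def, Matrix.transpose_map]
  rw [Matrix.charpoly, Matrix.charpoly, hkey, Matrix.det_mul, Matrix.det_mul]
  have : Q'ᵀ.det * Q'.det = 1 := by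
    rw [← Matrix.det_mul, hQ'orth, Matrix.det_one]
  calc Q'ᵀ.det * (Matrix.charmatrix M).det * Q'.det
      = (Q'ᵀ.det * Q'.det) * (Matrix.charmatrix M).det := by ring
    _ = (Matrix.charmatrix M).det := by rw [this, one_mul]

lemma aux_charpoly_of_orth {ι κ : Type*} [Fintype ι] [DecidableEq ι] [Fintype κ] [DecidableEq κ]
    (M : Matrix ι ι ℝ) (P : Matrix ι κ ℝ) (hc : Fintype.card ι = Fintype.card κ)
    (h1 : Pᵀ * P = 1) :
    M.charpoly = (Pᵀ * M * P).charpoly := by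
  let e : ι ≃ κ := Fintype.equivOfCardEq hc
  set Q : Matrix κ κ ℝ := P.submatrix (⇑e.symm) id with hQdef
  have hQT : Qᵀ = Pᵀ.submatrix id (⇑e.symm) := by
    rw [hQdef, Matrix.transpose_submatrix]
  have hQorth : Qᵀ * Q = 1 := by
    rw [hQT, hQdef, Matrix.submatrix_mul_equiv Pᵀ P id e.symm id, h1, Matrix.submatrix_id_id]
  have hconj : Pᵀ * M * P = Qᵀ * (M.submatrix (⇑e.symm) (⇑e.symm)) * Q := by
    rw [hQT, hQdef]
    rw [show Pᵀ.submatrix id ⇑e.symm * M.submatrix (⇑e.symm) (⇑e.symm)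
        = (Pᵀ * M).submatrix id (⇑e.symm) by
      have := Matrix.submatrix_mul_equiv Pᵀ M id (Equiv.refl ι) (⇑e.symm)
      simpa using this]
    rw [Matrix.submatrix_mul_equiv (Pᵀ * M) P id e.symm id, Matrix.submatrix_id_id]
  rw [hconj, aux_charpoly_conj_s8 _ _ hQorth]
  have : M.submatrix (⇑e.symm) (⇑e.symm) = Matrix.reindex e e M := rfl
  rw [this, Matrix.charpoly_reindex]

/-- Normalized biadjacency matrix. -/
noncomputable def nb {ι κ : Type*} [Fintype ι] [Fintype κ] [DecidableEq ι] [DecidableEq κ]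
    (M : Matrix ι κ ℝ) : Matrix ι κ ℝ :=
  (Matrix.diagonal fun i => (Real.sqrt (∑ j, M i j))⁻¹) * M *
    (Matrix.diagonal fun j => (Real.sqrt (∑ i, M i j))⁻¹)

lemma nb_transpose {ι κ : Type*} [Fintype ι] [Fintype κ] [DecidableEq ι] [DecidableEq κ]
    (M : Matrix ι κ ℝ) : nb (Mᵀ) = (nb M)ᵀ := by
  rw [nb, nb, Matrix.transpose_mul, Matrix.transpose_mul, Matrix.diagonal_transpose,
    Matrix.diagonal_transpose, Matrix.mul_assoc]
  congr 1 <;> simp [Matrix.transpose_apply]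

lemma aux_nlap_bipartite {ι κ : Type*} [Fintype ι] [Fintype κ] [DecidableEq ι] [DecidableEq κ]
    (M : Matrix ι κ ℝ) :
    nlap (Matrix.fromBlocks 0 M Mᵀ 0) =
      Matrix.fromBlocks 1 (-(nb M)) (-(nb M)ᵀ) 1 := by
  rw [nlap]
  have hf : (fun x : ι ⊕ κ => (Real.sqrt (∑ y, Matrix.fromBlocks 0 M Mᵀ 0 x y))⁻¹)
      = Sum.elim (fun i => (Real.sqrt (∑ j, M i j))⁻¹)
          (fun j => (Real.sqrt (∑ i, M i j))⁻¹) := by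
    funext x
    cases x with
    | inl i => simp [Fintype.sum_sum_type]
    | inr j => simp [Fintype.sum_sum_type, Matrix.transpose_apply]
  rw [hf, ← Matrix.fromBlocks_diagonal, ← Matrix.fromBlocks_one,
    Matrix.fromBlocks_multiply, Matrix.fromBlocks_multiply]
  simp only [Matrix.mul_zero, Matrix.zero_mul, Matrix.mul_one, Matrix.one_mul,
    add_zero, zero_add, Matrix.mul_assoc]
  rw [sub_eq_add_neg, Matrix.fromBlocks_neg]
  simp only [neg_zero]
  rw [Matrix.fromBlocks_add]
  simp only [add_zero, zero_add]
  rw [nb]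
  congr 1
  simp [Matrix.transpose_mul, Matrix.diagonal_transpose, Matrix.mul_assoc]
  ext a b
  simp only [Matrix.neg_apply, Matrix.transpose_apply, Matrix.diagonal_mul, Matrix.mul_diagonal]
  ring

lemma aux_nb_kron {ι₁ κ₁ ι₂ κ₂ : Type*} [Fintype ι₁] [Fintype κ₁] [Fintype ι₂] [Fintype κ₂]
    [DecidableEq ι₁] [DecidableEq κ₁] [DecidableEq ι₂] [DecidableEq κ₂]
    (V : Matrix ι₁ κ₁ ℝ) (B : Matrix ι₂ κ₂ ℝ)
    (hV : ∀ i j, 0 ≤ V i j) (hB : ∀ i j, 0 ≤ B i j) :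
    nb (V ⊗ₖ B) = nb V ⊗ₖ nb B := by
  have hrow : ∀ x : ι₁ × ι₂, (∑ y : κ₁ × κ₂, (V ⊗ₖ B) x y)
      = (∑ j, V x.1 j) * (∑ l, B x.2 l) := by
    intro x
    rw [Fintype.sum_prod_type, Finset.sum_mul_sum]
    rfl
  have hcol : ∀ y : κ₁ × κ₂, (∑ x : ι₁ × ι₂, (V ⊗ₖ B) x y)
      = (∑ i, V i y.1) * (∑ k, B k y.2) := by
    intro y
    rw [Fintype.sum_prod_type, Finset.sum_mul_sum]
    rfl
  have hsplit : ∀ (a b : ℝ), 0 ≤ a → (Real.sqrt (a * b))⁻¹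
      = (Real.sqrt a)⁻¹ * (Real.sqrt b)⁻¹ := by
    intro a b ha
    rw [Real.sqrt_mul ha, mul_inv]
  rw [nb, nb, nb]
  have h1 : (Matrix.diagonal fun x : ι₁ × ι₂ => (Real.sqrt (∑ y, (V ⊗ₖ B) x y))⁻¹)
      = (Matrix.diagonal fun i => (Real.sqrt (∑ j, V i j))⁻¹) ⊗ₖ
        (Matrix.diagonal fun k => (Real.sqrt (∑ l, B k l))⁻¹) := by
    rw [Matrix.diagonal_kronecker_diagonal]
    exact congrArg Matrix.diagonal (funext fun x => by
      rw [hrow x, hsplit _ _ (Finset.sum_nonneg fun j _ => hV _ j)])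
  have h2 : (Matrix.diagonal fun y : κ₁ × κ₂ => (Real.sqrt (∑ x, (V ⊗ₖ B) x y))⁻¹)
      = (Matrix.diagonal fun j => (Real.sqrt (∑ i, V i j))⁻¹) ⊗ₖ
        (Matrix.diagonal fun l => (Real.sqrt (∑ k, B k l))⁻¹) := by
    rw [Matrix.diagonal_kronecker_diagonal]
    exact congrArg Matrix.diagonal (funext fun y => by
      rw [hcol y, hsplit _ _ (Finset.sum_nonneg fun i _ => hV i _)])
  rw [h1, h2, ← Matrix.mul_kronecker_mul, ← Matrix.mul_kronecker_mul]

lemma aux_blockdiag_conj {ι₁ κ₁ ι₂ κ₂ : Type*} [Fintype ι₁] [Fintype κ₁] [Fintype ι₂] [Fintype κ₂]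
    [DecidableEq ι₁] [DecidableEq κ₁] [DecidableEq ι₂] [DecidableEq κ₂]
    (N₁ : Matrix ι₁ κ₁ ℝ) (N₂ : Matrix ι₂ κ₂ ℝ) (P₁ : Matrix ι₁ ι₂ ℝ) (P₂ : Matrix κ₁ κ₂ ℝ)
    (h11 : P₁ᵀ * P₁ = 1) (h12 : P₁ * P₁ᵀ = 1) (h21 : P₂ᵀ * P₂ = 1) (h22 : P₂ * P₂ᵀ = 1)
    (hN : P₁ᵀ * N₁ * P₂ = N₂) :
    (Matrix.fromBlocks P₁ 0 0 P₂)ᵀ * (Matrix.fromBlocks P₁ 0 0 P₂) = 1 ∧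
    (Matrix.fromBlocks P₁ 0 0 P₂) * (Matrix.fromBlocks P₁ 0 0 P₂)ᵀ = 1 ∧
    (Matrix.fromBlocks P₁ 0 0 P₂)ᵀ * Matrix.fromBlocks 1 (-N₁) (-N₁ᵀ) 1 *
      (Matrix.fromBlocks P₁ 0 0 P₂) = Matrix.fromBlocks 1 (-N₂) (-N₂ᵀ) 1 := by
  have hNT : P₂ᵀ * N₁ᵀ * P₁ = N₂ᵀ := by
    rw [← hN]
    simp [Matrix.transpose_mul, Matrix.mul_assoc]
  refine ⟨?_, ?_, ?_⟩
  · rw [Matrix.fromBlocks_transpose, Matrix.fromBlocks_multiply]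
    simp [h11, h21, Matrix.fromBlocks_one]
  · rw [Matrix.fromBlocks_transpose, Matrix.fromBlocks_multiply]
    simp [h12, h22, Matrix.fromBlocks_one]
  · rw [Matrix.fromBlocks_transpose, Matrix.fromBlocks_multiply, Matrix.fromBlocks_multiply]
    simp only [Matrix.transpose_zero, Matrix.mul_zero, Matrix.zero_mul, Matrix.mul_one,
      Matrix.one_mul, add_zero, zero_add, neg_zero, Matrix.mul_neg, Matrix.neg_mul]
    rw [h11, h21, hN, hNT]

lemma aux_blockanti_conj {ι₁ κ₁ ι₂ κ₂ : Type*} [Fintype ι₁] [Fintype κ₁] [Fintype ι₂] [Fintype κ₂]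
    [DecidableEq ι₁] [DecidableEq κ₁] [DecidableEq ι₂] [DecidableEq κ₂]
    (N₁ : Matrix ι₁ κ₁ ℝ) (N₂ : Matrix ι₂ κ₂ ℝ) (X : Matrix ι₁ κ₂ ℝ) (Y : Matrix κ₁ ι₂ ℝ)
    (h11 : Xᵀ * X = 1) (h12 : X * Xᵀ = 1) (h21 : Yᵀ * Y = 1) (h22 : Y * Yᵀ = 1)
    (hN : Yᵀ * N₁ᵀ * X = N₂) :
    (Matrix.fromBlocks 0 X Y 0)ᵀ * (Matrix.fromBlocks 0 X Y 0) = 1 ∧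
    (Matrix.fromBlocks 0 X Y 0) * (Matrix.fromBlocks 0 X Y 0)ᵀ = 1 ∧
    (Matrix.fromBlocks 0 X Y 0)ᵀ * Matrix.fromBlocks 1 (-N₁) (-N₁ᵀ) 1 *
      (Matrix.fromBlocks 0 X Y 0) = Matrix.fromBlocks 1 (-N₂) (-N₂ᵀ) 1 := by
  have hNT : Xᵀ * N₁ * Y = N₂ᵀ := by
    rw [← hN]
    simp [Matrix.transpose_mul, Matrix.mul_assoc]
  refine ⟨?_, ?_, ?_⟩
  · rw [Matrix.fromBlocks_transpose, Matrix.fromBlocks_multiply]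
    simp [h21, h11, Matrix.fromBlocks_one]
  · rw [Matrix.fromBlocks_transpose, Matrix.fromBlocks_multiply]
    simp [h12, h22, Matrix.fromBlocks_one]
  · rw [Matrix.fromBlocks_transpose, Matrix.fromBlocks_multiply, Matrix.fromBlocks_multiply]
    simp only [Matrix.transpose_zero, Matrix.mul_zero, Matrix.zero_mul, Matrix.mul_one,
      Matrix.one_mul, add_zero, zero_add, neg_zero, Matrix.mul_neg, Matrix.neg_mul]
    rw [h21, h11, hN, hNT]

/-- Theorem 3.3: for bipartite graphs `G_L`, `G_H` without isolated vertices with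
biadjacency matrices `V` (m×n) and `B` (p×q), if `m = n` or `p = q`, then the
normalized Laplacians of the graphs with adjacency matrices
`L ⊗̲ H = [[0,V⊗B],[Vᵀ⊗Bᵀ,0]]` and `L ⊗̲ H# = [[0,V⊗Bᵀ],[Vᵀ⊗B,0]]` are orthogonally
similar, hence cospectral. -/
theorem cospectral_normalized_laplacian_of_balanced {m n p q : ℕ}
    (V : Matrix (Fin m) (Fin n) ℝ) (B : Matrix (Fin p) (Fin q) ℝ)
    (hV01 : ∀ i j, V i j = 0 ∨ V i j = 1) (hB01 : ∀ i j, B i j = 0 ∨ B i j = 1)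
    (hVr : ∀ i, ∃ j, V i j = 1) (hVc : ∀ j, ∃ i, V i j = 1)
    (hBr : ∀ i, ∃ j, B i j = 1) (hBc : ∀ j, ∃ i, B i j = 1)
    (h : m = n ∨ p = q) :
    (∃ P : Matrix ((Fin m × Fin p) ⊕ (Fin n × Fin q)) ((Fin m × Fin q) ⊕ (Fin n × Fin p)) ℝ,
      Pᵀ * P = 1 ∧ P * Pᵀ = 1 ∧
      Pᵀ * nlap (Matrix.fromBlocks 0 (V ⊗ₖ B) (Vᵀ ⊗ₖ Bᵀ) 0) * P =
        nlap (Matrix.fromBlocks 0 (V ⊗ₖ Bᵀ) (Vᵀ ⊗ₖ B) 0)) ∧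
    (nlap (Matrix.fromBlocks 0 (V ⊗ₖ B) (Vᵀ ⊗ₖ Bᵀ)
        (0 : Matrix (Fin n × Fin q) (Fin n × Fin q) ℝ))).charpoly =
      (nlap (Matrix.fromBlocks 0 (V ⊗ₖ Bᵀ) (Vᵀ ⊗ₖ B)
        (0 : Matrix (Fin n × Fin p) (Fin n × Fin p) ℝ))).charpoly := by
  have hVpos : ∀ i j, 0 ≤ V i j := by
    intro i j; rcases hV01 i j with h' | h' <;> rw [h'] <;> norm_num
  have hBpos : ∀ i j, 0 ≤ B i j := by
    intro i j; rcases hB01 i j with h' | h' <;> rw [h'] <;> norm_num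
  have hBTpos : ∀ j i, 0 ≤ Bᵀ j i := fun j i => hBpos i j
  have hL1 : nlap (Matrix.fromBlocks 0 (V ⊗ₖ B) (Vᵀ ⊗ₖ Bᵀ) 0) =
      Matrix.fromBlocks 1 (-(nb V ⊗ₖ nb B)) (-(nb V ⊗ₖ nb B)ᵀ) 1 := by
    rw [Matrix.kroneckerMap_transpose, aux_nlap_bipartite, aux_nb_kron V B hVpos hBpos]
  have hL2 : nlap (Matrix.fromBlocks 0 (V ⊗ₖ Bᵀ) (Vᵀ ⊗ₖ B) 0) =
      Matrix.fromBlocks 1 (-(nb V ⊗ₖ (nb B)ᵀ)) (-(nb V ⊗ₖ (nb B)ᵀ)ᵀ) 1 := by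
    have hbt : Vᵀ ⊗ₖ B = (V ⊗ₖ Bᵀ)ᵀ := by
      rw [← Matrix.kroneckerMap_transpose, Matrix.transpose_transpose]
    rw [hbt, aux_nlap_bipartite, aux_nb_kron V Bᵀ hVpos hBTpos, nb_transpose]
  have key : ∃ P : Matrix ((Fin m × Fin p) ⊕ (Fin n × Fin q))
      ((Fin m × Fin q) ⊕ (Fin n × Fin p)) ℝ,
      Pᵀ * P = 1 ∧ P * Pᵀ = 1 ∧
      Pᵀ * nlap (Matrix.fromBlocks 0 (V ⊗ₖ B) (Vᵀ ⊗ₖ Bᵀ) 0) * P =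
        nlap (Matrix.fromBlocks 0 (V ⊗ₖ Bᵀ) (Vᵀ ⊗ₖ B) 0) := by
    rw [hL1, hL2]
    rcases h with hmn | hpq
    · subst hmn
      obtain ⟨O, hO1, hO2, hO3⟩ := aux_orth_conj ((nb V)ᵀ)
      have hO3' : Oᵀ * (nb V)ᵀ * Oᵀ = nb V := by rw [hO3, Matrix.transpose_transpose]
      set X := Oᵀ ⊗ₖ (1 : Matrix (Fin p) (Fin p) ℝ) with hXdef
      set Y := O ⊗ₖ (1 : Matrix (Fin q) (Fin q) ℝ) with hYdef
      have hX1 : Xᵀ * X = 1 := by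
        rw [hXdef, ← Matrix.kroneckerMap_transpose, Matrix.transpose_transpose,
          Matrix.transpose_one, ← Matrix.mul_kronecker_mul, hO2, Matrix.mul_one,
          Matrix.one_kronecker_one]
      have hX2 : X * Xᵀ = 1 := mul_eq_one_comm.mp hX1
      have hY1 : Yᵀ * Y = 1 := by
        rw [hYdef, ← Matrix.kroneckerMap_transpose, Matrix.transpose_one,
          ← Matrix.mul_kronecker_mul, hO1, Matrix.mul_one, Matrix.one_kronecker_one]
      have hY2 : Y * Yᵀ = 1 := mul_eq_one_comm.mp hY1
      have hN : Yᵀ * (nb V ⊗ₖ nb B)ᵀ * X = nb V ⊗ₖ (nb B)ᵀ := by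
        rw [hYdef, hXdef, ← Matrix.kroneckerMap_transpose, ← Matrix.kroneckerMap_transpose,
          Matrix.transpose_one, ← Matrix.mul_kronecker_mul, ← Matrix.mul_kronecker_mul,
          hO3', Matrix.one_mul, Matrix.mul_one]
      obtain ⟨g1, g2, g3⟩ := aux_blockanti_conj (nb V ⊗ₖ nb B) (nb V ⊗ₖ (nb B)ᵀ) X Y
        hX1 hX2 hY1 hY2 hN
      exact ⟨Matrix.fromBlocks 0 X Y 0, g1, g2, g3⟩
    · subst hpq
      obtain ⟨O, hO1, hO2, hO3⟩ := aux_orth_conj (nb B)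
      set P₁ := (1 : Matrix (Fin m) (Fin m) ℝ) ⊗ₖ O with hP₁def
      set P₂ := (1 : Matrix (Fin n) (Fin n) ℝ) ⊗ₖ Oᵀ with hP₂def
      have h11 : P₁ᵀ * P₁ = 1 := by
        rw [hP₁def, ← Matrix.kroneckerMap_transpose, Matrix.transpose_one,
          ← Matrix.mul_kronecker_mul, hO1, Matrix.mul_one, Matrix.one_kronecker_one]
      have h12 : P₁ * P₁ᵀ = 1 := mul_eq_one_comm.mp h11
      have h21 : P₂ᵀ * P₂ = 1 := by
        rw [hP₂def, ← Matrix.kroneckerMap_transpose, Matrix.transpose_one,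
          Matrix.transpose_transpose, ← Matrix.mul_kronecker_mul, hO2, Matrix.mul_one,
          Matrix.one_kronecker_one]
      have h22 : P₂ * P₂ᵀ = 1 := mul_eq_one_comm.mp h21
      have hN : P₁ᵀ * (nb V ⊗ₖ nb B) * P₂ = nb V ⊗ₖ (nb B)ᵀ := by
        rw [hP₁def, hP₂def, ← Matrix.kroneckerMap_transpose, Matrix.transpose_one,
          ← Matrix.mul_kronecker_mul, ← Matrix.mul_kronecker_mul, hO3, Matrix.one_mul,
          Matrix.mul_one]
      obtain ⟨g1, g2, g3⟩ := aux_blockdiag_conj (nb V ⊗ₖ nb B) (nb V ⊗ₖ (nb B)ᵀ) P₁ P₂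
        h11 h12 h21 h22 hN
      exact ⟨Matrix.fromBlocks P₁ 0 0 P₂, g1, g2, g3⟩
  refine ⟨key, ?_⟩
  obtain ⟨P, h1, h2, h3⟩ := key
  have hc : Fintype.card ((Fin m × Fin p) ⊕ (Fin n × Fin q))
      = Fintype.card ((Fin m × Fin q) ⊕ (Fin n × Fin p)) := by
    simp only [Fintype.card_sum, Fintype.card_prod, Fintype.card_fin]
    rcases h with h' | h' <;> subst h' <;> ring
  calc (nlap (Matrix.fromBlocks 0 (V ⊗ₖ B) (Vᵀ ⊗ₖ Bᵀ) 0)).charpoly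
      = (Pᵀ * nlap (Matrix.fromBlocks 0 (V ⊗ₖ B) (Vᵀ ⊗ₖ Bᵀ) 0) * P).charpoly :=
        aux_charpoly_of_orth _ P hc h1
    _ = _ := by rw [h3]
end

section
/- Let A, B, C be (0,1)-matrices with C nonzero and A square with no zero rows. Then C⊗A and C⊗B are permutationally equivalent if and only if A and B are permutationally equivalent. -/
open Matrix Kronecker

namespace Hammack

open Function

variable {α β γ δ α' β' γ' δ' : Type}

def IsHom (R : α → β → Prop) (S : γ → δ → Prop) (f : α → γ) (g : β → δ) : Prop :=
  ∀ a b, R a b → S (f a) (g b)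

def Homs (R : α → β → Prop) (S : γ → δ → Prop) : Type :=
  {p : (α → γ) × (β → δ) // IsHom R S p.1 p.2}

def Injs (R : α → β → Prop) (S : γ → δ → Prop) : Type :=
  {p : (α → γ) × (β → δ) // IsHom R S p.1 p.2 ∧ Injective p.1 ∧ Injective p.2}

instance {R : α → β → Prop} {S : γ → δ → Prop} [Finite α] [Finite β] [Finite γ] [Finite δ] :
    Finite (Homs R S) := by unfold Homs; infer_instance

instance {R : α → β → Prop} {S : γ → δ → Prop} [Finite α] [Finite β] [Finite γ] [Finite δ] :
    Finite (Injs R S) := by unfold Injs; infer_instance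

noncomputable def homCount (R : α → β → Prop) (S : γ → δ → Prop) : ℕ := Nat.card (Homs R S)
noncomputable def injCount (R : α → β → Prop) (S : γ → δ → Prop) : ℕ := Nat.card (Injs R S)

/-- Transport of hom-sets along equivalences. -/
def homsTransport (eα : α ≃ α') (eβ : β ≃ β') (eγ : γ ≃ γ') (eδ : δ ≃ δ')
    {R : α → β → Prop} {R' : α' → β' → Prop} {S : γ → δ → Prop} {S' : γ' → δ' → Prop}
    (hR : ∀ a b, R a b ↔ R' (eα a) (eβ b)) (hS : ∀ c d, S c d ↔ S' (eγ c) (eδ d)) :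
    Homs R S → Homs R' S' := fun p =>
  ⟨(eγ ∘ p.1.1 ∘ eα.symm, eδ ∘ p.1.2 ∘ eβ.symm), by
    intro a b h
    have hr : R (eα.symm a) (eβ.symm b) := by
      rw [hR]; simpa using h
    exact (hS _ _).1 (p.2 _ _ hr)⟩

def homsEquiv (eα : α ≃ α') (eβ : β ≃ β') (eγ : γ ≃ γ') (eδ : δ ≃ δ')
    {R : α → β → Prop} {R' : α' → β' → Prop} {S : γ → δ → Prop} {S' : γ' → δ' → Prop}
    (hR : ∀ a b, R a b ↔ R' (eα a) (eβ b)) (hS : ∀ c d, S c d ↔ S' (eγ c) (eδ d)) :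
    Homs R S ≃ Homs R' S' where
  toFun := homsTransport eα eβ eγ eδ hR hS
  invFun := homsTransport eα.symm eβ.symm eγ.symm eδ.symm
    (fun a b => by simpa using (hR (eα.symm a) (eβ.symm b)).symm)
    (fun c d => by simpa using (hS (eγ.symm c) (eδ.symm d)).symm)
  left_inv p := by
    apply Subtype.ext
    apply Prod.ext <;> funext x <;> simp [homsTransport]
  right_inv p := by
    apply Subtype.ext
    apply Prod.ext <;> funext x <;> simp [homsTransport]

theorem homCount_transport (eα : α ≃ α') (eβ : β ≃ β') (eγ : γ ≃ γ') (eδ : δ ≃ δ')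
    {R : α → β → Prop} {R' : α' → β' → Prop} {S : γ → δ → Prop} {S' : γ' → δ' → Prop}
    (hR : ∀ a b, R a b ↔ R' (eα a) (eβ b)) (hS : ∀ c d, S c d ↔ S' (eγ c) (eδ d)) :
    homCount R S = homCount R' S' :=
  Nat.card_congr (homsEquiv eα eβ eγ eδ hR hS)

def injsEquiv (eα : α ≃ α') (eβ : β ≃ β') (eγ : γ ≃ γ') (eδ : δ ≃ δ')
    {R : α → β → Prop} {R' : α' → β' → Prop} {S : γ → δ → Prop} {S' : γ' → δ' → Prop}
    (hR : ∀ a b, R a b ↔ R' (eα a) (eβ b)) (hS : ∀ c d, S c d ↔ S' (eγ c) (eδ d)) :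
    Injs R S ≃ Injs R' S' where
  toFun p := ⟨((homsEquiv eα eβ eγ eδ hR hS ⟨p.1, p.2.1⟩ : Homs R' S').1), by
    refine ⟨(homsEquiv eα eβ eγ eδ hR hS ⟨p.1, p.2.1⟩).2, ?_, ?_⟩
    · exact (eγ.injective.comp p.2.2.1).comp eα.symm.injective
    · exact (eδ.injective.comp p.2.2.2).comp eβ.symm.injective⟩
  invFun p := ⟨(((homsEquiv eα eβ eγ eδ hR hS).symm ⟨p.1, p.2.1⟩ : Homs R S).1), by
    refine ⟨((homsEquiv eα eβ eγ eδ hR hS).symm ⟨p.1, p.2.1⟩).2, ?_, ?_⟩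
    · exact (eγ.symm.injective.comp p.2.2.1).comp eα.injective
    · exact (eδ.symm.injective.comp p.2.2.2).comp eβ.injective⟩
  left_inv p := by
    apply Subtype.ext
    have h := ((congrArg (homsEquiv eα eβ eγ eδ hR hS).symm (Subtype.coe_eta ((homsEquiv eα eβ eγ eδ hR hS) ⟨p.1, p.2.1⟩) ((homsEquiv eα eβ eγ eδ hR hS) ⟨p.1, p.2.1⟩).2)).trans ((homsEquiv eα eβ eγ eδ hR hS).symm_apply_apply ⟨p.1, p.2.1⟩))
    exact (congrArg Subtype.val h :)
  right_inv p := by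
    apply Subtype.ext
    have h := ((congrArg (homsEquiv eα eβ eγ eδ hR hS) (Subtype.coe_eta ((homsEquiv eα eβ eγ eδ hR hS).symm ⟨p.1, p.2.1⟩) ((homsEquiv eα eβ eγ eδ hR hS).symm ⟨p.1, p.2.1⟩).2)).trans ((homsEquiv eα eβ eγ eδ hR hS).apply_symm_apply ⟨p.1, p.2.1⟩))
    exact (congrArg Subtype.val h :)

theorem injCount_transport (eα : α ≃ α') (eβ : β ≃ β') (eγ : γ ≃ γ') (eδ : δ ≃ δ')
    {R : α → β → Prop} {R' : α' → β' → Prop} {S : γ → δ → Prop} {S' : γ' → δ' → Prop}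
    (hR : ∀ a b, R a b ↔ R' (eα a) (eβ b)) (hS : ∀ c d, S c d ↔ S' (eγ c) (eδ d)) :
    injCount R S = injCount R' S' :=
  Nat.card_congr (injsEquiv eα eβ eγ eδ hR hS)

/-- Pointwise-iff congruence. -/
theorem homCount_congr {R R' : α → β → Prop} {S S' : γ → δ → Prop}
    (hR : ∀ a b, R a b ↔ R' a b) (hS : ∀ c d, S c d ↔ S' c d) :
    homCount R S = homCount R' S' :=
  homCount_transport (Equiv.refl _) (Equiv.refl _) (Equiv.refl _) (Equiv.refl _) hR hS

theorem injCount_congr {R R' : α → β → Prop} {S S' : γ → δ → Prop}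
    (hR : ∀ a b, R a b ↔ R' a b) (hS : ∀ c d, S c d ↔ S' c d) :
    injCount R S = injCount R' S' :=
  injCount_transport (Equiv.refl _) (Equiv.refl _) (Equiv.refl _) (Equiv.refl _) hR hS


/-- The product relation (Kronecker structure). -/
def prodRel (S : γ → δ → Prop) (S' : γ' → δ' → Prop) : γ × γ' → δ × δ' → Prop :=
  fun c d => S c.1 d.1 ∧ S' c.2 d.2

def homsProdEquiv (R : α → β → Prop) (S : γ → δ → Prop) (S' : γ' → δ' → Prop) :
    Homs R (prodRel S S') ≃ Homs R S × Homs R S' where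
  toFun p := (⟨(fun a => (p.1.1 a).1, fun b => (p.1.2 b).1), fun a b h => (p.2 a b h).1⟩,
              ⟨(fun a => (p.1.1 a).2, fun b => (p.1.2 b).2), fun a b h => (p.2 a b h).2⟩)
  invFun q := ⟨(fun a => (q.1.1.1 a, q.2.1.1 a), fun b => (q.1.1.2 b, q.2.1.2 b)),
    fun a b h => ⟨q.1.2 a b h, q.2.2 a b h⟩⟩
  left_inv p := rfl
  right_inv q := rfl

theorem homCount_prod (R : α → β → Prop) (S : γ → δ → Prop) (S' : γ' → δ' → Prop) :
    homCount R (prodRel S S') = homCount R S * homCount R S' := by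
  rw [homCount, Nat.card_congr (homsProdEquiv R S S'), Nat.card_prod]; rfl

theorem homCount_pos [Finite α] [Finite β] [Finite γ] [Finite δ]
    (R : α → β → Prop) (S : γ → δ → Prop) (c : γ) (d : δ) (h : S c d) :
    0 < homCount R S := by
  have : Nonempty (Homs R S) := ⟨⟨(fun _ => c, fun _ => d), fun _ _ _ => h⟩⟩
  exact Nat.card_pos

theorem injCount_pos_self [Finite α] [Finite β] (R : α → β → Prop) :
    0 < injCount R R := by
  have : Nonempty (Injs R R) :=
    ⟨⟨(id, id), fun _ _ h => h, injective_id, injective_id⟩⟩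
  exact Nat.card_pos

/-! ### Kernel decomposition -/

instance [Finite α] : Finite (Setoid α) :=
  Finite.of_injective (fun s => (⇑s : α → α → Prop))
    (fun s t h => Setoid.ext fun a b => iff_of_eq (congrFun (congrFun h a) b))

def qRel (s : Setoid α) (t : Setoid β) (R : α → β → Prop) :
    Quotient s → Quotient t → Prop :=
  fun qa qb => ∃ a b, Quotient.mk s a = qa ∧ Quotient.mk t b = qb ∧ R a b

def kerPair {R : α → β → Prop} {S : γ → δ → Prop} (q : Homs R S) : Setoid α × Setoid β :=
  (Setoid.ker q.1.1, Setoid.ker q.1.2)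

def fiberEquiv (R : α → β → Prop) (S : γ → δ → Prop) (s : Setoid α) (t : Setoid β) :
    {q : Homs R S // kerPair q = (s, t)} ≃ Injs (qRel s t R) S where
  toFun q := by
    obtain ⟨⟨⟨f, g⟩, hfg⟩, hker⟩ := q
    have hs : Setoid.ker f = s := (Prod.mk.injEq _ _ _ _ ▸ hker : _ ∧ _).1
    have ht : Setoid.ker g = t := (Prod.mk.injEq _ _ _ _ ▸ hker : _ ∧ _).2
    refine ⟨(Quotient.lift f ?_, Quotient.lift g ?_), ?_, ?_, ?_⟩
    · exact fun a b h => (hs ▸ h : Setoid.ker f a b)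
    · exact fun a b h => (ht ▸ h : Setoid.ker g a b)
    · rintro qa qb ⟨a, b, rfl, rfl, hR⟩
      exact hfg a b hR
    · rintro ⟨a⟩ ⟨b⟩ h
      exact Quotient.sound (hs ▸ (h : Setoid.ker f a b))
    · rintro ⟨a⟩ ⟨b⟩ h
      exact Quotient.sound (ht ▸ (h : Setoid.ker g a b))
  invFun p :=
    ⟨⟨(p.1.1 ∘ Quotient.mk s, p.1.2 ∘ Quotient.mk t),
      fun a b h => p.2.1 _ _ ⟨a, b, rfl, rfl, h⟩⟩, by
      obtain ⟨⟨f, g⟩, hhom, hinf, hing⟩ := p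
      refine Prod.ext ?_ ?_ <;> apply Setoid.ext <;> intro a b
      · exact ⟨fun h => Quotient.exact (hinf h), fun h => congrArg f (Quotient.sound h)⟩
      · exact ⟨fun h => Quotient.exact (hing h), fun h => congrArg g (Quotient.sound h)⟩⟩
  left_inv q := by
    obtain ⟨⟨⟨f, g⟩, hfg⟩, hker⟩ := q
    apply Subtype.ext
    apply Subtype.ext
    rfl
  right_inv p := by
    obtain ⟨⟨f, g⟩, hhom, hinf, hing⟩ := p
    apply Subtype.ext
    refine Prod.ext ?_ ?_ <;> funext x <;> induction x using Quotient.ind <;> rfl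

lemma nat_card_sigma {ι : Type} [Fintype ι] (f : ι → Type) [∀ i, Finite (f i)] :
    Nat.card (Sigma f) = ∑ i, Nat.card (f i) := by
  letI : ∀ i, Fintype (f i) := fun i => Fintype.ofFinite _
  simp [Nat.card_eq_fintype_card]

theorem homCount_eq_sum_injCount [Finite α] [Finite β] [Finite γ] [Finite δ]
    [Fintype (Setoid α)] [Fintype (Setoid β)]
    (R : α → β → Prop) (S : γ → δ → Prop) :
    homCount R S = ∑ st : Setoid α × Setoid β, injCount (qRel st.1 st.2 R) S := by
  have h1 : homCount R S = Nat.card (Σ st : Setoid α × Setoid β,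
      {q : Homs R S // kerPair q = st}) :=
    Nat.card_congr (Equiv.sigmaFiberEquiv kerPair).symm
  rw [h1, nat_card_sigma]
  exact Finset.sum_congr rfl fun st _ =>
    Nat.card_congr (fiberEquiv R S st.1 st.2)

/-! ### Lovász-style induction -/

lemma bot_rel_eq {a b : α} (h : (⊥ : Setoid α) a b) : a = b := by
  have := Setoid.bot_def (α := α)
  exact (iff_of_eq (congrFun (congrFun this a) b)).1 h

def botEquiv (α : Type) : α ≃ Quotient (⊥ : Setoid α) where
  toFun := Quotient.mk _
  invFun := Quotient.lift id fun a b h => bot_rel_eq h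
  left_inv a := rfl
  right_inv q := by induction q using Quotient.ind; rfl

lemma qRel_bot_iff (R : α → β → Prop) (a : α) (b : β) :
    qRel ⊥ ⊥ R (botEquiv α a) (botEquiv β b) ↔ R a b := by
  constructor
  · rintro ⟨a', b', ha, hb, hR⟩
    have ha' : a' = a := bot_rel_eq (Quotient.exact ha)
    have hb' : b' = b := bot_rel_eq (Quotient.exact hb)
    rwa [ha', hb'] at hR
  · intro h
    exact ⟨a, b, rfl, rfl, h⟩

lemma card_quotient_le [Finite α] (s : Setoid α) : Nat.card (Quotient s) ≤ Nat.card α :=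
  Nat.card_le_card_of_surjective _ Quotient.mk_surjective

lemma card_quotient_lt [Finite α] {s : Setoid α} (hs : s ≠ ⊥) :
    Nat.card (Quotient s) < Nat.card α := by
  have hex : ∃ a b : α, s a b ∧ a ≠ b := by
    by_contra hcon
    push_neg at hcon
    refine hs (Setoid.ext fun x y => ?_)
    constructor
    · intro h
      have hxy := hcon x y h
      subst hxy
      exact (iff_of_eq (congrFun (congrFun (Setoid.bot_def (α := α)) x) x)).2 rfl
    · intro h
      have hxy : x = y := bot_rel_eq h
      subst hxy
      exact s.iseqv.refl x
  obtain ⟨a, b, hab, hne⟩ := hex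
  letI := Fintype.ofFinite α
  letI := Fintype.ofFinite (Quotient s)
  have hni : ¬ Function.Injective (Quotient.mk s) := fun w => hne (w (Quotient.sound hab))
  have := Fintype.card_lt_of_surjective_not_injective (Quotient.mk s)
    Quotient.mk_surjective hni
  simpa [Nat.card_eq_fintype_card] using this

theorem injCount_eq_of_homCount_eq {γ δ : Type} [Finite γ] [Finite δ]
    {SA SB : γ → δ → Prop}
    (H : ∀ (α β : Type) [Finite α] [Finite β] (R : α → β → Prop),
      homCount R SA = homCount R SB) :
    ∀ (α β : Type) [Finite α] [Finite β] (R : α → β → Prop),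
      injCount R SA = injCount R SB := by
  suffices h : ∀ (N : ℕ) (α β : Type) [Finite α] [Finite β] (R : α → β → Prop),
      Nat.card α + Nat.card β ≤ N → injCount R SA = injCount R SB by
    intro α β _ _ R; exact h _ α β R le_rfl
  intro N
  induction N with
  | zero =>
    intro α β _ _ R hle
    have hα : IsEmpty α := by
      have : Nat.card α = 0 := by omega
      rcases Nat.card_eq_zero.1 this with h | h
      · exact not_nonempty_iff.1 (by simpa using h)
      · exact absurd ‹Finite α› h.false.elim
    have hβ : IsEmpty β := by
      have : Nat.card β = 0 := by omega
      rcases Nat.card_eq_zero.1 this with h | h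
      · exact not_nonempty_iff.1 (by simpa using h)
      · exact absurd ‹Finite β› h.false.elim
    have key : ∀ (S : γ → δ → Prop), injCount R S = 1 := by
      intro S
      letI : Unique (Injs R S) := by
        refine ⟨⟨⟨(fun a => hα.elim a, fun b => hβ.elim b), ?_, ?_, ?_⟩⟩, ?_⟩
        · exact fun a => hα.elim a
        · exact fun a => hα.elim a
        · exact fun b => hβ.elim b
        · rintro ⟨⟨f, g⟩, _⟩
          apply Subtype.ext
          refine Prod.ext ?_ ?_ <;> funext x
          · exact hα.elim x
          · exact hβ.elim x
      exact Nat.card_unique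
    rw [key SA, key SB]
  | succ N IH =>
    intro α β _ _ R hle
    letI : Fintype (Setoid α) := Fintype.ofFinite _
    letI : Fintype (Setoid β) := Fintype.ofFinite _
    letI : DecidableEq (Setoid α × Setoid β) := Classical.decEq _
    have hsum : ∑ st : Setoid α × Setoid β, injCount (qRel st.1 st.2 R) SA
        = ∑ st : Setoid α × Setoid β, injCount (qRel st.1 st.2 R) SB := by
      rw [← homCount_eq_sum_injCount, ← homCount_eq_sum_injCount]
      exact H α β R
    set u : Setoid α × Setoid β := (⊥, ⊥) with hu
    have hrest : ∀ st ∈ Finset.univ.erase u,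
        injCount (qRel st.1 st.2 R) SA = injCount (qRel st.1 st.2 R) SB := by
      intro st hst
      have hne : st ≠ u := Finset.ne_of_mem_erase hst
      have hlt : Nat.card (Quotient st.1) + Nat.card (Quotient st.2) ≤ N := by
        have hcase : st.1 ≠ ⊥ ∨ st.2 ≠ ⊥ := by
          by_contra hcc
          push_neg at hcc
          exact hne (Prod.ext hcc.1 hcc.2)
        rcases hcase with h1 | h2
        · have := card_quotient_lt h1
          have := card_quotient_le st.2
          omega
        · have := card_quotient_lt h2
          have := card_quotient_le st.1
          omega
      exact IH (Quotient st.1) (Quotient st.2) (qRel st.1 st.2 R) hlt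
    have hA : ∑ st ∈ Finset.univ.erase u, injCount (qRel st.1 st.2 R) SA
        + injCount (qRel u.1 u.2 R) SA
        = ∑ st : Setoid α × Setoid β, injCount (qRel st.1 st.2 R) SA :=
      Finset.sum_erase_add Finset.univ _ (Finset.mem_univ u)
    have hB : ∑ st ∈ Finset.univ.erase u, injCount (qRel st.1 st.2 R) SB
        + injCount (qRel u.1 u.2 R) SB
        = ∑ st : Setoid α × Setoid β, injCount (qRel st.1 st.2 R) SB :=
      Finset.sum_erase_add Finset.univ _ (Finset.mem_univ u)
    have hErest : ∑ st ∈ Finset.univ.erase u, injCount (qRel st.1 st.2 R) SA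
        = ∑ st ∈ Finset.univ.erase u, injCount (qRel st.1 st.2 R) SB :=
      Finset.sum_congr rfl hrest
    have hbot : injCount (qRel u.1 u.2 R) SA = injCount (qRel u.1 u.2 R) SB := by
      omega
    have h1 : injCount R SA = injCount (qRel (⊥ : Setoid α) (⊥ : Setoid β) R) SA :=
      injCount_transport (botEquiv α) (botEquiv β) (Equiv.refl γ) (Equiv.refl δ)
        (fun a b => (qRel_bot_iff R a b).symm) (fun c d => Iff.rfl)
    have h2 : injCount R SB = injCount (qRel (⊥ : Setoid α) (⊥ : Setoid β) R) SB :=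
      injCount_transport (botEquiv α) (botEquiv β) (Equiv.refl γ) (Equiv.refl δ)
        (fun a b => (qRel_bot_iff R a b).symm) (fun c d => Iff.rfl)
    rw [h1, h2]
    exact hbot

/-! ### Isomorphism from injective homs in both directions -/

theorem iso_of_injs {α β γ δ : Type} [Finite α] [Finite β]
    {R : α → β → Prop} {S : γ → δ → Prop}
    {f : α → γ} {g : β → δ} {f' : γ → α} {g' : δ → β}
    (hf : IsHom R S f g) (hf' : IsHom S R f' g')
    (hinf : Injective f) (hing : Injective g)
    (hinf' : Injective f') (hing' : Injective g') :
    ∀ a b, R a b ↔ S (f a) (g b) := by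
  intro a b
  refine ⟨fun h => hf a b h, fun h => ?_⟩
  have hh : IsHom R R (f' ∘ f) (g' ∘ g) := fun x y hr => hf' _ _ (hf _ _ hr)
  have hinj1 : Injective (f' ∘ f) := hinf'.comp hinf
  have hinj2 : Injective (g' ∘ g) := hing'.comp hing
  let E := {p : α × β // R p.1 p.2}
  let φ : E → E := fun p => ⟨(f' (f p.1.1), g' (g p.1.2)), hh _ _ p.2⟩
  have hφinj : Injective φ := by
    rintro ⟨⟨x1, x2⟩, hx⟩ ⟨⟨y1, y2⟩, hy⟩ he
    have hval : ((f' (f x1), g' (g x2)) : α × β) = (f' (f y1), g' (g y2)) :=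
      congrArg Subtype.val he
    have e1 : x1 = y1 := hinj1 (congrArg Prod.fst hval)
    have e2 : x2 = y2 := hinj2 (congrArg Prod.snd hval)
    apply Subtype.ext
    exact Prod.ext e1 e2
  have hφsurj : Surjective φ := Finite.surjective_of_injective hφinj
  have hR' : R (f' (f a)) (g' (g b)) := hf' _ _ h
  obtain ⟨⟨⟨a', b'⟩, hab'⟩, hpq⟩ := hφsurj ⟨(f' (f a), g' (g b)), hR'⟩
  have hval : ((f' (f a'), g' (g b')) : α × β) = (f' (f a), g' (g b)) :=
    congrArg Subtype.val hpq
  have e1 : a' = a := hinj1 (congrArg Prod.fst hval)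
  have e2 : b' = b := hinj2 (congrArg Prod.snd hval)
  rwa [e1, e2] at hab'

end Hammack

/-- A square permutation matrix. -/
def IsPermMatrix {n : Type*} [DecidableEq n] (P : Matrix n n ℝ) : Prop :=
  ∃ σ : Equiv.Perm n, P = σ.permMatrix ℝ

/-- `M` and `N` are permutationally equivalent: `Qᵀ M P = N` for permutation
matrices `P`, `Q`. -/
def PermEquiv {ι κ : Type*} [Fintype ι] [Fintype κ] [DecidableEq ι] [DecidableEq κ]
    (M N : Matrix ι κ ℝ) : Prop :=
  ∃ (P : Matrix κ κ ℝ) (Q : Matrix ι ι ℝ),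
    IsPermMatrix P ∧ IsPermMatrix Q ∧ Qᵀ * M * P = N

open Hammack Function

lemma permEquiv_iff {ι κ : Type*} [Fintype ι] [Fintype κ] [DecidableEq ι] [DecidableEq κ]
    (M N : Matrix ι κ ℝ) :
    PermEquiv M N ↔ ∃ (σ : Equiv.Perm ι) (τ : Equiv.Perm κ), ∀ i j, N i j = M (σ i) (τ j) := by
  have key : ∀ (σ : Equiv.Perm ι) (τ : Equiv.Perm κ) (i : ι) (j : κ),
      ((σ.permMatrix ℝ)ᵀ * M * (τ.permMatrix ℝ)) i j = M (σ.symm i) (τ.symm j) := by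
    intro σ τ i j
    have h1 : (σ.permMatrix ℝ)ᵀ = (Equiv.Perm.permMatrix ℝ σ.symm) := by
      show (σ.toPEquiv.toMatrix : Matrix ι ι ℝ)ᵀ = (σ.symm.toPEquiv.toMatrix : Matrix ι ι ℝ)
      rw [Equiv.toPEquiv_symm, PEquiv.toMatrix_symm]
    rw [Matrix.mul_assoc, h1]
    show ((σ.symm.toPEquiv.toMatrix : Matrix ι ι ℝ) * (M * (τ.toPEquiv.toMatrix : Matrix κ κ ℝ))) i j = _
    rw [PEquiv.toMatrix_toPEquiv_mul, PEquiv.mul_toMatrix_toPEquiv]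
    rfl
  constructor
  · rintro ⟨P, Q, ⟨τ, rfl⟩, ⟨σ, rfl⟩, hQP⟩
    refine ⟨σ.symm, τ.symm, fun i j => ?_⟩
    rw [← hQP]
    exact key σ τ i j
  · rintro ⟨σ, τ, hs⟩
    refine ⟨Equiv.Perm.permMatrix ℝ τ.symm, Equiv.Perm.permMatrix ℝ σ.symm,
      ⟨_, rfl⟩, ⟨_, rfl⟩, ?_⟩
    ext i j
    rw [key]
    simp [(hs i j).symm]

/-- The relation of a (0,1)-matrix. -/
def MRel {ι κ : Type*} (M : Matrix ι κ ℝ) : ι → κ → Prop := fun i j => M i j = 1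

lemma mrel_kron {s t n : ℕ} (C : Matrix (Fin s) (Fin t) ℝ) (A : Matrix (Fin n) (Fin n) ℝ)
    (hC01 : ∀ i j, C i j = 0 ∨ C i j = 1) (hA01 : ∀ i j, A i j = 0 ∨ A i j = 1) :
    ∀ p q, MRel (C ⊗ₖ A) p q ↔ prodRel (MRel C) (MRel A) p q := by
  rintro ⟨i, i'⟩ ⟨j, j'⟩
  show C i j * A i' j' = 1 ↔ (C i j = 1 ∧ A i' j' = 1)
  rcases hC01 i j with h | h <;> rcases hA01 i' j' with h' | h' <;> simp [h, h']

/-- Hammack's cancellation law: for `(0,1)`-matrices `A`, `B`, `C` with `C` nonzero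
and `A` square with no zero rows, `C ⊗ A` and `C ⊗ B` are permutationally equivalent
iff `A` and `B` are permutationally equivalent. -/
theorem hammack_cancellation {s t n : ℕ}
    (A B : Matrix (Fin n) (Fin n) ℝ) (C : Matrix (Fin s) (Fin t) ℝ)
    (hA01 : ∀ i j, A i j = 0 ∨ A i j = 1) (hB01 : ∀ i j, B i j = 0 ∨ B i j = 1)
    (hC01 : ∀ i j, C i j = 0 ∨ C i j = 1)
    (hC : C ≠ 0) (hA : ∀ i, ∃ j, A i j = 1) :
    PermEquiv (C ⊗ₖ A) (C ⊗ₖ B) ↔ PermEquiv A B := by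
  classical
  rw [permEquiv_iff, permEquiv_iff]
  constructor
  · rintro ⟨σ, τ, h⟩
    have hCA := mrel_kron C A hC01 hA01
    have hCB := mrel_kron C B hC01 hB01
    obtain ⟨i0, j0, hc⟩ : ∃ i j, C i j = 1 := by
      by_contra hcon
      push_neg at hcon
      apply hC
      ext i j
      rcases hC01 i j with h0 | h1
      · simpa using h0
      · exact absurd h1 (hcon i j)
    have hhom : ∀ (α β : Type) [Finite α] [Finite β] (R : α → β → Prop),
        homCount R (MRel A) = homCount R (MRel B) := by
      intro α β _ _ R
      have h1 : homCount R (MRel (C ⊗ₖ B)) = homCount R (MRel (C ⊗ₖ A)) :=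
        homCount_transport (Equiv.refl α) (Equiv.refl β) σ τ
          (fun a b => Iff.rfl) (fun c d => by rw [MRel, MRel, h c d])
      have h2 : homCount R (MRel (C ⊗ₖ A)) = homCount R (MRel C) * homCount R (MRel A) := by
        rw [homCount_congr (fun a b => Iff.rfl) hCA, homCount_prod]
      have h3 : homCount R (MRel (C ⊗ₖ B)) = homCount R (MRel C) * homCount R (MRel B) := by
        rw [homCount_congr (fun a b => Iff.rfl) hCB, homCount_prod]
      have hpos : 0 < homCount R (MRel C) := homCount_pos R (MRel C) i0 j0 hc
      have hmul : homCount R (MRel C) * homCount R (MRel B)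
          = homCount R (MRel C) * homCount R (MRel A) := by
        rw [← h2, ← h3, h1]
      exact (Nat.eq_of_mul_eq_mul_left hpos hmul).symm
    have hinj := injCount_eq_of_homCount_eq (SA := MRel A) (SB := MRel B) hhom
    have hinjBA := injCount_eq_of_homCount_eq (SA := MRel B) (SB := MRel A)
      (fun α β _ _ R => (hhom α β R).symm)
    have hposA : 0 < injCount (MRel A) (MRel B) := by
      rw [← hinj (Fin n) (Fin n) (MRel A)]
      exact injCount_pos_self _
    have hposB : 0 < injCount (MRel B) (MRel A) := by
      rw [← hinjBA (Fin n) (Fin n) (MRel B)]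
      exact injCount_pos_self _
    obtain ⟨⟨⟨f, g⟩, hfg, hinf, hing⟩⟩ : Nonempty (Injs (MRel A) (MRel B)) :=
      (Nat.card_pos_iff.1 hposA).1
    obtain ⟨⟨⟨f', g'⟩, hfg', hinf', hing'⟩⟩ : Nonempty (Injs (MRel B) (MRel A)) :=
      (Nat.card_pos_iff.1 hposB).1
    have hiso := iso_of_injs hfg hfg' hinf hing hinf' hing'
    have heq : ∀ a b, A a b = B (f a) (g b) := by
      intro a b
      rcases hA01 a b with h0 | h1
      · rcases hB01 (f a) (g b) with h0' | h1'
        · rw [h0, h0']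
        · exfalso
          have hAb : MRel A a b := (hiso a b).2 h1'
          rw [MRel, h0] at hAb
          norm_num at hAb
      · have hBb := (hiso a b).1 h1
        rw [h1, hBb]
    have hfb : Bijective f := hinf.bijective_of_finite
    have hgb : Bijective g := hing.bijective_of_finite
    set e1 := Equiv.ofBijective f hfb with he1
    set e2 := Equiv.ofBijective g hgb with he2
    refine ⟨e1.symm, e2.symm, fun i j => ?_⟩
    have hfi : f (e1.symm i) = i := e1.apply_symm_apply i
    have hgj : g (e2.symm j) = j := e2.apply_symm_apply j
    calc B i j = B (f (e1.symm i)) (g (e2.symm j)) := by rw [hfi, hgj]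
      _ = A (e1.symm i) (e2.symm j) := (heq _ _).symm
  · rintro ⟨σ, τ, h⟩
    refine ⟨Equiv.prodCongr (Equiv.refl (Fin s)) σ, Equiv.prodCongr (Equiv.refl (Fin t)) τ, ?_⟩
    rintro ⟨i, i'⟩ ⟨j, j'⟩
    show C i j * B i' j' = C i j * A (σ i') (τ j')
    rw [h i' j']
end

section
/- Let G_L and G_H be bipartite graphs with biadjacency matrices V and B. If V is permutationally equivalent to Vᵀ (G_L has property π) or B is permutationally equivalent to Bᵀ (G_H has property π), then the graphs with adjacency matrices L ⊗̲ H = [[0, V⊗B],[Vᵀ⊗Bᵀ, 0]] and L ⊗̲ H# = [[0, V⊗Bᵀ],[Vᵀ⊗B, 0]] are isomorphic, via an isomorphism respecting the canonical partite sets. -/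
open Matrix Kronecker

/-- `M` is permutationally equivalent to its transpose (PET). -/
def IsPET {ι κ : Type*} [Fintype ι] [Fintype κ] [DecidableEq ι] [DecidableEq κ]
    (M : Matrix ι κ ℝ) : Prop :=
  ∃ (P : Matrix κ ι ℝ) (Q : Matrix ι κ ℝ),
    IsGPermMatrix P ∧ IsGPermMatrix Q ∧ Qᵀ * M * P = Mᵀ

lemma IsGPermMatrix.kron {ι κ ι' κ' : Type*} [DecidableEq κ] [DecidableEq κ']
    {P : Matrix ι κ ℝ} {Q : Matrix ι' κ' ℝ}
    (hP : IsGPermMatrix P) (hQ : IsGPermMatrix Q) : IsGPermMatrix (P ⊗ₖ Q) := by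
  obtain ⟨e, he⟩ := hP
  obtain ⟨f, hf⟩ := hQ
  refine ⟨e.prodCongr f, fun i k => ?_⟩
  simp only [kroneckerMap_apply, he, hf, Equiv.prodCongr_apply, Prod.map]
  rcases k with ⟨k1, k2⟩
  by_cases h1 : e i.1 = k1 <;> by_cases h2 : f i.2 = k2 <;>
    simp [h1, h2, Prod.ext_iff]

lemma IsGPermMatrix.one {ι : Type*} [DecidableEq ι] : IsGPermMatrix (1 : Matrix ι ι ℝ) :=
  ⟨Equiv.refl ι, fun i k => by simp [Matrix.one_apply]; congr⟩

/-- Theorem 4.3 (b) ⟹ (a): if `V` is PET (`G_L` has property π) or `B` is PET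
(`G_H` has property π), then the graphs with adjacency matrices
`L ⊗̲ H = [[0,V⊗B],[Vᵀ⊗Bᵀ,0]]` and `L ⊗̲ H# = [[0,V⊗Bᵀ],[Vᵀ⊗B,0]]` are isomorphic
via an isomorphism respecting the canonical partite sets, i.e. the adjacency matrices
are conjugate by a block diagonal or block anti-diagonal permutation matrix. -/
theorem iso_respecting_partite_sets_of_PET {m n p q : ℕ}
    (V : Matrix (Fin m) (Fin n) ℝ) (B : Matrix (Fin p) (Fin q) ℝ)
    (hV01 : ∀ i j, V i j = 0 ∨ V i j = 1) (hB01 : ∀ i j, B i j = 0 ∨ B i j = 1)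
    (h : IsPET V ∨ IsPET B) :
    ∃ P : Matrix ((Fin m × Fin p) ⊕ (Fin n × Fin q)) ((Fin m × Fin q) ⊕ (Fin n × Fin p)) ℝ,
      ((∃ (P₁ : Matrix (Fin m × Fin p) (Fin m × Fin q) ℝ)
          (P₄ : Matrix (Fin n × Fin q) (Fin n × Fin p) ℝ),
          IsGPermMatrix P₁ ∧ IsGPermMatrix P₄ ∧ P = Matrix.fromBlocks P₁ 0 0 P₄) ∨
       (∃ (P₂ : Matrix (Fin m × Fin p) (Fin n × Fin p) ℝ)
          (P₃ : Matrix (Fin n × Fin q) (Fin m × Fin q) ℝ),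
          IsGPermMatrix P₂ ∧ IsGPermMatrix P₃ ∧ P = Matrix.fromBlocks 0 P₂ P₃ 0)) ∧
      Pᵀ * (Matrix.fromBlocks 0 (V ⊗ₖ B) (Vᵀ ⊗ₖ Bᵀ) 0) * P =
        Matrix.fromBlocks 0 (V ⊗ₖ Bᵀ) (Vᵀ ⊗ₖ B) 0 := by
  rcases h with ⟨P, Q, hP, hQ, hPQ⟩ | ⟨P, Q, hP, hQ, hPQ⟩
  · -- V PET: anti-diagonal, P₂ = Q ⊗ 1, P₃ = P ⊗ 1
    have hPQ' : Pᵀ * Vᵀ * Q = V := by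
      have := congrArg Matrix.transpose hPQ
      simpa [Matrix.transpose_mul, ← Matrix.mul_assoc] using this
    refine ⟨Matrix.fromBlocks 0 (Q ⊗ₖ (1 : Matrix (Fin p) (Fin p) ℝ))
        (P ⊗ₖ (1 : Matrix (Fin q) (Fin q) ℝ)) 0,
      Or.inr ⟨_, _, hQ.kron IsGPermMatrix.one, hP.kron IsGPermMatrix.one, rfl⟩, ?_⟩
    rw [Matrix.fromBlocks_transpose, Matrix.fromBlocks_multiply, Matrix.fromBlocks_multiply]
    simp only [Matrix.transpose_zero, Matrix.mul_zero, Matrix.zero_mul, add_zero, zero_add,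
      ← Matrix.kroneckerMap_transpose, ← Matrix.mul_kronecker_mul, Matrix.transpose_one,
      Matrix.mul_one, Matrix.one_mul, hPQ, hPQ']
  · -- B PET: diagonal, P₁ = 1 ⊗ Q, P₄ = 1 ⊗ P
    have hPQ' : Pᵀ * Bᵀ * Q = B := by
      have := congrArg Matrix.transpose hPQ
      simpa [Matrix.transpose_mul, ← Matrix.mul_assoc] using this
    refine ⟨Matrix.fromBlocks ((1 : Matrix (Fin m) (Fin m) ℝ) ⊗ₖ Q) 0 0
        ((1 : Matrix (Fin n) (Fin n) ℝ) ⊗ₖ P),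
      Or.inl ⟨_, _, IsGPermMatrix.one.kron hQ, IsGPermMatrix.one.kron hP, rfl⟩, ?_⟩
    rw [Matrix.fromBlocks_transpose, Matrix.fromBlocks_multiply, Matrix.fromBlocks_multiply]
    simp only [Matrix.transpose_zero, Matrix.mul_zero, Matrix.zero_mul, add_zero, zero_add,
      ← Matrix.kroneckerMap_transpose, ← Matrix.mul_kronecker_mul, Matrix.transpose_one,
      Matrix.mul_one, Matrix.one_mul, hPQ, hPQ']
end

section
/- Let G_L and G_H be bipartite graphs without isolated vertices, with biadjacency matrices V and B. If there is an isomorphism between the graphs with adjacency matrices L ⊗̲ H and L ⊗̲ H# that respects the canonical partite sets, then V is PET or B is PET. -/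
open Matrix Kronecker

set_option linter.unusedSectionVars false
set_option linter.unreachableTactic false
set_option linter.unusedTactic false
set_option maxHeartbeats 1000000
open Function
section HomCount
open scoped Classical
variable {α β γ δ : Type} [Fintype α] [Fintype β] [Fintype γ] [Fintype δ]

def homSet (R : α → β → Prop) (S : γ → δ → Prop) : Type :=
  {fg : (α → γ) × (β → δ) // ∀ x y, R x y → S (fg.1 x) (fg.2 y)}
def injSet (R : α → β → Prop) (S : γ → δ → Prop) : Type :=
  {fg : (α → γ) × (β → δ) //
    (∀ x y, R x y → S (fg.1 x) (fg.2 y)) ∧ Injective fg.1 ∧ Injective fg.2}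
noncomputable instance (R : α → β → Prop) (S : γ → δ → Prop) : Fintype (homSet R S) := by
  unfold homSet; infer_instance
noncomputable instance (R : α → β → Prop) (S : γ → δ → Prop) : Fintype (injSet R S) := by
  unfold injSet; infer_instance
noncomputable def homCount (R : α → β → Prop) (S : γ → δ → Prop) : ℕ :=
  Fintype.card (homSet R S)
noncomputable def injCount (R : α → β → Prop) (S : γ → δ → Prop) : ℕ :=
  Fintype.card (injSet R S)

variable {α' β' γ' δ' : Type} [Fintype α'] [Fintype β'] [Fintype γ'] [Fintype δ']

lemma homCount_congr_target {R : α → β → Prop} {S : γ → δ → Prop} {S' : γ' → δ' → Prop}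
    (e : γ ≃ γ') (f : δ ≃ δ') (h : ∀ x y, S x y ↔ S' (e x) (f y)) :
    homCount R S = homCount R S' := by
  apply Fintype.card_congr
  refine ⟨fun u => ⟨(e ∘ u.1.1, f ∘ u.1.2), fun x y hxy => ?_⟩,
          fun u => ⟨(e.symm ∘ u.1.1, f.symm ∘ u.1.2), fun x y hxy => ?_⟩, ?_, ?_⟩
  · exact (h _ _).1 (u.2 x y hxy)
  · exact (h _ _).2 (by simpa using u.2 x y hxy)
  · rintro ⟨⟨u1, u2⟩, hu⟩; apply Subtype.ext; ext x <;> simp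
  · rintro ⟨⟨u1, u2⟩, hu⟩; apply Subtype.ext; ext x <;> simp

lemma injCount_congr_target {R : α → β → Prop} {S : γ → δ → Prop} {S' : γ' → δ' → Prop}
    (e : γ ≃ γ') (f : δ ≃ δ') (h : ∀ x y, S x y ↔ S' (e x) (f y)) :
    injCount R S = injCount R S' := by
  apply Fintype.card_congr
  refine ⟨fun u => ⟨(e ∘ u.1.1, f ∘ u.1.2),
            fun x y hxy => (h _ _).1 (u.2.1 x y hxy),
            e.injective.comp u.2.2.1, f.injective.comp u.2.2.2⟩,
          fun u => ⟨(e.symm ∘ u.1.1, f.symm ∘ u.1.2),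
            fun x y hxy => (h _ _).2 (by simpa using u.2.1 x y hxy),
            e.symm.injective.comp u.2.2.1, f.symm.injective.comp u.2.2.2⟩, ?_, ?_⟩
  · rintro ⟨⟨u1, u2⟩, hu⟩; apply Subtype.ext; ext x <;> simp
  · rintro ⟨⟨u1, u2⟩, hu⟩; apply Subtype.ext; ext x <;> simp

lemma homCount_congr_source {R : α → β → Prop} {R' : α' → β' → Prop} {S : γ → δ → Prop}
    (e : α ≃ α') (f : β ≃ β') (h : ∀ x y, R x y ↔ R' (e x) (f y)) :
    homCount R S = homCount R' S := by
  apply Fintype.card_congr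
  refine ⟨fun u => ⟨(u.1.1 ∘ e.symm, u.1.2 ∘ f.symm), fun x y hxy => ?_⟩,
          fun u => ⟨(u.1.1 ∘ e, u.1.2 ∘ f), fun x y hxy => ?_⟩, ?_, ?_⟩
  · exact u.2 _ _ (by simpa using (h (e.symm x) (f.symm y)).2 (by simpa using hxy))
  · exact u.2 _ _ ((h x y).1 hxy)
  · rintro ⟨⟨u1, u2⟩, hu⟩; apply Subtype.ext; ext x <;> simp
  · rintro ⟨⟨u1, u2⟩, hu⟩; apply Subtype.ext; ext x <;> simp

lemma injCount_congr_source {R : α → β → Prop} {R' : α' → β' → Prop} {S : γ → δ → Prop}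
    (e : α ≃ α') (f : β ≃ β') (h : ∀ x y, R x y ↔ R' (e x) (f y)) :
    injCount R S = injCount R' S := by
  apply Fintype.card_congr
  refine ⟨fun u => ⟨(u.1.1 ∘ e.symm, u.1.2 ∘ f.symm),
            fun x y hxy =>
              u.2.1 _ _ (by simpa using (h (e.symm x) (f.symm y)).2 (by simpa using hxy)),
            u.2.2.1.comp e.symm.injective, u.2.2.2.comp f.symm.injective⟩,
          fun u => ⟨(u.1.1 ∘ e, u.1.2 ∘ f),
            fun x y hxy => u.2.1 _ _ ((h x y).1 hxy),
            u.2.2.1.comp e.injective, u.2.2.2.comp f.injective⟩, ?_, ?_⟩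
  · rintro ⟨⟨u1, u2⟩, hu⟩; apply Subtype.ext; ext x <;> simp
  · rintro ⟨⟨u1, u2⟩, hu⟩; apply Subtype.ext; ext x <;> simp

lemma homCount_prod {R : α → β → Prop} {S : γ → δ → Prop} {S' : γ' → δ' → Prop} :
    homCount R (fun (x : γ × γ') (y : δ × δ') => S x.1 y.1 ∧ S' x.2 y.2) =
      homCount R S * homCount R S' := by
  rw [homCount, homCount, homCount, ← Fintype.card_prod]
  apply Fintype.card_congr
  refine ⟨fun u => ⟨⟨(fun a => (u.1.1 a).1, fun b => (u.1.2 b).1),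
            fun x y hxy => (u.2 x y hxy).1⟩,
          ⟨(fun a => (u.1.1 a).2, fun b => (u.1.2 b).2), fun x y hxy => (u.2 x y hxy).2⟩⟩,
          fun u => ⟨(fun a => (u.1.1.1 a, u.2.1.1 a), fun b => (u.1.1.2 b, u.2.1.2 b)),
            fun x y hxy => ⟨u.1.2 x y hxy, u.2.2 x y hxy⟩⟩, ?_, ?_⟩
  · rintro ⟨⟨u1, u2⟩, hu⟩; apply Subtype.ext; ext x <;> simp
  · rintro ⟨⟨⟨u1, u2⟩, hu⟩, ⟨⟨v1, v2⟩, hv⟩⟩; constructor <;> ext x <;> simp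

lemma homCount_pos {R : α → β → Prop} {S : γ → δ → Prop} (h : ∃ i j, S i j) :
    0 < homCount R S := by
  obtain ⟨i, j, hij⟩ := h
  rw [homCount, Fintype.card_pos_iff]
  exact ⟨⟨(fun _ => i, fun _ => j), fun _ _ _ => hij⟩⟩


noncomputable instance setoidFintype : Fintype (Setoid α) :=
  Fintype.ofInjective (fun s : Setoid α => fun a b => decide (s a b))
    (by
      intro s t h
      apply Setoid.ext
      intro a b
      have : decide (s a b) = decide (t a b) := congrFun (congrFun h a) b
      exact decide_eq_decide.mp this)

/-- quotient relation: image of `R` under the quotient maps -/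
def quotRel (R : α → β → Prop) (r : Setoid α) (s : Setoid β) :
    Quotient r → Quotient s → Prop :=
  fun x y => ∃ a b, Quotient.mk r a = x ∧ Quotient.mk s b = y ∧ R a b

/-- the fiber of homs with prescribed kernels is equivalent to injective homs from
the quotient structure -/
noncomputable def fiberEquiv (R : α → β → Prop) (S : γ → δ → Prop)
    (r : Setoid α) (s : Setoid β) :
    {h : homSet R S // Setoid.ker h.1.1 = r ∧ Setoid.ker h.1.2 = s} ≃
      injSet (quotRel R r s) S := by
  refine ⟨fun h => ⟨(Quotient.lift h.1.1.1 ?_, Quotient.lift h.1.1.2 ?_), ?_, ?_, ?_⟩,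
          fun u => ⟨⟨(u.1.1 ∘ Quotient.mk r, u.1.2 ∘ Quotient.mk s), ?_⟩, ?_, ?_⟩, ?_, ?_⟩
  · intro a b hab; rw [← h.2.1] at hab; exact hab
  · intro a b hab; rw [← h.2.2] at hab; exact hab
  · rintro x y ⟨a, b, rfl, rfl, hab⟩
    exact h.1.2 a b hab
  · intro x y
    induction x using Quotient.ind
    induction y using Quotient.ind
    intro hxy
    apply Quotient.sound
    rw [← h.2.1]
    exact hxy
  · intro x y
    induction x using Quotient.ind
    induction y using Quotient.ind
    intro hxy
    apply Quotient.sound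
    rw [← h.2.2]
    exact hxy
  · intro x y hxy
    exact u.2.1 _ _ ⟨x, y, rfl, rfl, hxy⟩
  · apply Setoid.ext
    intro a b
    constructor
    · intro hab
      exact Quotient.exact (u.2.2.1 hab)
    · intro hab
      show u.1.1 _ = u.1.1 _
      rw [Quotient.sound hab]
  · apply Setoid.ext
    intro a b
    constructor
    · intro hab
      exact Quotient.exact (u.2.2.2 hab)
    · intro hab
      show u.1.2 _ = u.1.2 _
      rw [Quotient.sound hab]
  · rintro ⟨⟨⟨u1, u2⟩, hu⟩, h1, h2⟩
    apply Subtype.ext; apply Subtype.ext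
    ext x <;> simp
  · rintro ⟨⟨u1, u2⟩, hu, hi1, hi2⟩
    apply Subtype.ext
    ext x
    · induction x using Quotient.ind; simp
    · induction x using Quotient.ind; simp

lemma homCount_decomp (R : α → β → Prop) (S : γ → δ → Prop) :
    homCount R S =
      ∑ rs : Setoid α × Setoid β, injCount (quotRel R rs.1 rs.2) S := by
  rw [homCount]
  rw [← Fintype.card_congr (Equiv.sigmaFiberEquiv
    (fun h : homSet R S => ((Setoid.ker h.1.1, Setoid.ker h.1.2) : Setoid α × Setoid β)))]
  rw [Fintype.card_sigma]
  apply Finset.sum_congr rfl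
  intro rs _
  rw [injCount]
  apply Fintype.card_congr
  refine (Equiv.subtypeEquivRight ?_).trans (fiberEquiv R S rs.1 rs.2)
  intro h
  rw [Prod.ext_iff]

noncomputable def quotBotEquiv : Quotient (⊥ : Setoid α) ≃ α :=
  ⟨Quotient.lift id (fun a b h => h), Quotient.mk ⊥,
   by intro x; induction x using Quotient.ind; rfl, fun a => rfl⟩

lemma quotRel_bot_iff (R : α → β → Prop) (x : Quotient (⊥ : Setoid α))
    (y : Quotient (⊥ : Setoid β)) :
    quotRel R ⊥ ⊥ x y ↔ R (quotBotEquiv x) (quotBotEquiv y) := by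
  induction x using Quotient.ind
  induction y using Quotient.ind
  constructor
  · rintro ⟨a, b, ha, hb, hab⟩
    have ha' : a = _ := Quotient.exact ha
    have hb' : b = _ := Quotient.exact hb
    rw [← ha', ← hb']
    exact hab
  · intro hab
    exact ⟨_, _, rfl, rfl, hab⟩

lemma injCount_quotRel_bot (R : α → β → Prop) (S : γ → δ → Prop) :
    injCount (quotRel R ⊥ ⊥) S = injCount R S :=
  injCount_congr_source quotBotEquiv quotBotEquiv (quotRel_bot_iff R)

lemma card_quot_lt (r : Setoid α) (hr : r ≠ ⊥) :
    Fintype.card (Quotient r) < Fintype.card α := by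
  apply Fintype.card_lt_of_surjective_not_injective (Quotient.mk r)
    Quotient.mk_surjective
  intro hinj
  apply hr
  apply le_antisymm _ bot_le
  intro a b hab
  exact hinj (Quotient.sound hab)

lemma card_quot_le (r : Setoid α) :
    Fintype.card (Quotient r) ≤ Fintype.card α :=
  Fintype.card_le_of_surjective _ Quotient.mk_surjective

end HomCount

section Main
open scoped Classical
variable {γ δ γ' δ' : Type} [Fintype γ] [Fintype δ] [Fintype γ'] [Fintype δ']

theorem injCount_eq_of_homCount_eq (S : γ → δ → Prop) (S' : γ' → δ' → Prop)
    (H : ∀ (α β : Type) [Fintype α] [Fintype β] (R : α → β → Prop),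
      homCount R S = homCount R S') :
    ∀ (α β : Type) [Fintype α] [Fintype β] (R : α → β → Prop),
      injCount R S = injCount R S' := by
  suffices h : ∀ (N : ℕ) (α β : Type) [Fintype α] [Fintype β] (R : α → β → Prop),
      Fintype.card α + Fintype.card β = N → injCount R S = injCount R S' by
    intro α β _ _ R
    exact h _ α β R rfl
  intro N
  induction N using Nat.strong_induction_on with
  | _ N IH =>
    intro α β _ _ R hN
    have hd := homCount_decomp R S
    have hd' := homCount_decomp R S'
    rw [← Finset.sum_erase_add _ _ (Finset.mem_univ ((⊥ : Setoid α), (⊥ : Setoid β)))]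
      at hd hd'
    rw [injCount_quotRel_bot] at hd hd'
    have hsum : ∑ rs ∈ Finset.univ.erase ((⊥ : Setoid α), (⊥ : Setoid β)),
        injCount (quotRel R rs.1 rs.2) S =
        ∑ rs ∈ Finset.univ.erase ((⊥ : Setoid α), (⊥ : Setoid β)),
        injCount (quotRel R rs.1 rs.2) S' := by
      apply Finset.sum_congr rfl
      intro rs hrs
      have hne : rs ≠ ((⊥ : Setoid α), (⊥ : Setoid β)) := Finset.ne_of_mem_erase hrs
      have hlt : Fintype.card (Quotient rs.1) + Fintype.card (Quotient rs.2) < N := by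
        rcases Prod.mk.injEq .. ▸ (fun h => hne (Prod.ext_iff.mpr h)) with _
        have h1 := card_quot_le rs.1
        have h2 := card_quot_le rs.2
        rcases eq_or_ne rs.1 ⊥ with h | h
        · have h2' : rs.2 ≠ ⊥ := by
            intro hb; exact hne (Prod.ext_iff.mpr ⟨h, hb⟩)
          have := card_quot_lt rs.2 h2'
          omega
        · have := card_quot_lt rs.1 h
          omega
      exact IH _ hlt _ _ _ rfl
    rw [hsum] at hd
    have := H α β R
    rw [hd, hd'] at this
    omega

theorem iso_of_homCount_eq (S : γ → δ → Prop) (S' : γ' → δ' → Prop)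
    (H : ∀ (α β : Type) [Fintype α] [Fintype β] (R : α → β → Prop),
      homCount R S = homCount R S') :
    ∃ (e : γ ≃ γ') (f : δ ≃ δ'), ∀ x y, S x y ↔ S' (e x) (f y) := by
  have Hinj := injCount_eq_of_homCount_eq S S' H
  -- injective hom S → S'
  have h1 : 0 < injCount S S' := by
    rw [← Hinj γ δ S]
    rw [injCount, Fintype.card_pos_iff]
    exact ⟨⟨(id, id), fun x y h => h, injective_id, injective_id⟩⟩
  have h2 : 0 < injCount S' S := by
    rw [← injCount_eq_of_homCount_eq S' S (fun α β _ _ R => (H α β R).symm) γ' δ' S']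
    rw [injCount, Fintype.card_pos_iff]
    exact ⟨⟨(id, id), fun x y h => h, injective_id, injective_id⟩⟩
  rw [injCount, Fintype.card_pos_iff] at h1 h2
  obtain ⟨⟨⟨f₁, f₂⟩, hf, hf₁, hf₂⟩⟩ := h1
  obtain ⟨⟨⟨g₁, g₂⟩, hg, hg₁, hg₂⟩⟩ := h2
  -- reflection of h = g ∘ f
  have hrefl : ∀ x y, S (g₁ (f₁ x)) (g₂ (f₂ y)) → S x y := by
    intro x y hxy
    set φ : {e : γ × δ // S e.1 e.2} → {e : γ × δ // S e.1 e.2} :=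
      fun e => ⟨(g₁ (f₁ e.1.1), g₂ (f₂ e.1.2)), hg _ _ (hf _ _ e.2)⟩ with hφ
    have hφinj : Injective φ := by
      intro a b hab
      apply Subtype.ext
      have := congrArg Subtype.val hab
      simp only [hφ, Prod.mk.injEq] at this
      exact Prod.ext (hf₁ (hg₁ this.1)) (hf₂ (hg₂ this.2))
    have hφsurj : Surjective φ := Finite.surjective_of_injective hφinj
    obtain ⟨⟨⟨u, v⟩, huv⟩, he⟩ := hφsurj ⟨(g₁ (f₁ x), g₂ (f₂ y)), hxy⟩
    have := congrArg Subtype.val he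
    simp only [hφ, Prod.mk.injEq] at this
    have hu : u = x := hf₁ (hg₁ this.1)
    have hv : v = y := hf₂ (hg₂ this.2)
    rw [← hu, ← hv]
    exact huv
  have hc₁ : Fintype.card γ = Fintype.card γ' :=
    le_antisymm (Fintype.card_le_of_injective f₁ hf₁) (Fintype.card_le_of_injective g₁ hg₁)
  have hc₂ : Fintype.card δ = Fintype.card δ' :=
    le_antisymm (Fintype.card_le_of_injective f₂ hf₂) (Fintype.card_le_of_injective g₂ hg₂)
  have hb₁ : Bijective f₁ := (Fintype.bijective_iff_injective_and_card f₁).mpr ⟨hf₁, hc₁⟩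
  have hb₂ : Bijective f₂ := (Fintype.bijective_iff_injective_and_card f₂).mpr ⟨hf₂, hc₂⟩
  refine ⟨Equiv.ofBijective f₁ hb₁, Equiv.ofBijective f₂ hb₂, fun x y => ⟨hf x y, ?_⟩⟩
  intro hxy
  exact hrefl x y (hg _ _ hxy)

end Main


open Matrix Kronecker Function

section MatrixGlue
variable {ι κ ι' κ' : Type*} [Fintype ι] [Fintype κ] [Fintype ι'] [Fintype κ']
  [DecidableEq ι] [DecidableEq κ] [DecidableEq ι'] [DecidableEq κ']

lemma mul_perm_apply (M : Matrix ι κ ℝ) (P : Matrix κ κ' ℝ) (e : κ ≃ κ')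
    (hP : ∀ i k, P i k = if e i = k then 1 else 0) (x : ι) (v : κ') :
    (M * P) x v = M x (e.symm v) := by
  rw [Matrix.mul_apply]
  have : ∀ y : κ, M x y * P y v = if y = e.symm v then M x y else 0 := by
    intro y
    rw [hP]
    by_cases hy : e y = v
    · rw [if_pos hy, if_pos (by rw [← hy]; simp), mul_one]
    · rw [if_neg hy, if_neg (by intro hc; apply hy; rw [hc]; simp), mul_zero]
  simp only [this]
  exact Finset.sum_ite_eq' _ _ _ |>.trans (by simp)

lemma transpose_mul_perm_apply (M : Matrix ι κ ℝ) (Q : Matrix ι ι' ℝ) (e : ι ≃ ι')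
    (hQ : ∀ i k, Q i k = if e i = k then 1 else 0) (u : ι') (v : κ) :
    (Qᵀ * M) u v = M (e.symm u) v := by
  rw [Matrix.mul_apply]
  have : ∀ y : ι, Qᵀ u y * M y v = if y = e.symm u then M y v else 0 := by
    intro y
    rw [Matrix.transpose_apply, hQ]
    by_cases hy : e y = u
    · rw [if_pos hy, if_pos (by rw [← hy]; simp), one_mul]
    · rw [if_neg hy, if_neg (by intro hc; apply hy; rw [hc]; simp), zero_mul]
  simp only [this]
  exact Finset.sum_ite_eq' _ _ _ |>.trans (by simp)

lemma conj_perm_apply (M : Matrix ι κ ℝ) (N : Matrix ι' κ' ℝ)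
    (Q : Matrix ι ι' ℝ) (P : Matrix κ κ' ℝ) (eQ : ι ≃ ι') (eP : κ ≃ κ')
    (hQ : ∀ i k, Q i k = if eQ i = k then 1 else 0)
    (hP : ∀ i k, P i k = if eP i = k then 1 else 0)
    (heq : Qᵀ * M * P = N) (u : ι') (v : κ') :
    N u v = M (eQ.symm u) (eP.symm v) := by
  rw [← heq, mul_perm_apply _ _ eP hP, transpose_mul_perm_apply _ _ eQ hQ]

lemma isPET_of_equiv (M : Matrix ι κ ℝ) (eQ : ι ≃ κ) (eP : κ ≃ ι)
    (h : ∀ u v, M u v = M (eP v) (eQ u)) : IsPET M := by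
  refine ⟨Matrix.of fun v x => if eP v = x then 1 else 0,
          Matrix.of fun u y => if eQ u = y then 1 else 0,
          ⟨eP, fun _ _ => rfl⟩, ⟨eQ, fun _ _ => rfl⟩, ?_⟩
  ext y x
  rw [Matrix.mul_assoc]
  rw [transpose_mul_perm_apply (M * Matrix.of fun v x => if eP v = x then 1 else 0)
        (Matrix.of fun u y => if eQ u = y then 1 else 0) eQ (fun _ _ => rfl)]
  rw [mul_perm_apply M (Matrix.of fun v x => if eP v = x then 1 else 0) eP (fun _ _ => rfl)]
  rw [Matrix.transpose_apply, h (eQ.symm y) (eP.symm x)]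
  simp

lemma mul01_eq_one_iff {a b : ℝ} (ha : a = 0 ∨ a = 1) (hb : b = 0 ∨ b = 1) :
    a * b = 1 ↔ a = 1 ∧ b = 1 := by
  rcases ha with rfl | rfl <;> rcases hb with rfl | rfl <;> norm_num

end MatrixGlue


section MoreGlue
open Matrix Kronecker Function

variable {ι κ γ' δ' : Type} [Fintype ι] [Fintype κ] [Fintype γ'] [Fintype δ']

def matRel (M : Matrix ι κ ℝ) : ι → κ → Prop := fun i j => M i j = 1

lemma eq01_of_iff {a b : ℝ} (ha : a = 0 ∨ a = 1) (hb : b = 0 ∨ b = 1)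
    (h : a = 1 ↔ b = 1) : a = b := by
  rcases ha with rfl | rfl <;> rcases hb with rfl | rfl <;> simp_all

lemma kron_rel_iff (V : Matrix ι κ ℝ) (B : Matrix γ' δ' ℝ)
    (hV01 : ∀ i j, V i j = 0 ∨ V i j = 1) (hB01 : ∀ i j, B i j = 0 ∨ B i j = 1)
    (x : ι × γ') (y : κ × δ') :
    matRel (V ⊗ₖ B) x y ↔ matRel V x.1 y.1 ∧ matRel B x.2 y.2 := by
  unfold matRel
  rw [Matrix.kroneckerMap_apply]
  exact mul01_eq_one_iff (hV01 _ _) (hB01 _ _)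

end MoreGlue

/-- Theorem 4.3 (a) ⟹ (b): if the graphs with adjacency matrices
`L ⊗̲ H = [[0,V⊗B],[Vᵀ⊗Bᵀ,0]]` and `L ⊗̲ H# = [[0,V⊗Bᵀ],[Vᵀ⊗B,0]]` are isomorphic
via an isomorphism respecting the canonical partite sets (a conjugating permutation
matrix in block diagonal or block anti-diagonal form), and the bipartite graphs
`G_L`, `G_H` have no isolated vertices, then `V` is PET or `B` is PET. -/
theorem PET_of_iso_respecting_partite_sets {m n p q : ℕ}
    (V : Matrix (Fin m) (Fin n) ℝ) (B : Matrix (Fin p) (Fin q) ℝ)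
    (hV01 : ∀ i j, V i j = 0 ∨ V i j = 1) (hB01 : ∀ i j, B i j = 0 ∨ B i j = 1)
    (hVr : ∀ i, ∃ j, V i j = 1) (hVc : ∀ j, ∃ i, V i j = 1)
    (hBr : ∀ i, ∃ j, B i j = 1) (hBc : ∀ j, ∃ i, B i j = 1)
    (h : ∃ P : Matrix ((Fin m × Fin p) ⊕ (Fin n × Fin q)) ((Fin m × Fin q) ⊕ (Fin n × Fin p)) ℝ,
      ((∃ (P₁ : Matrix (Fin m × Fin p) (Fin m × Fin q) ℝ)
          (P₄ : Matrix (Fin n × Fin q) (Fin n × Fin p) ℝ),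
          IsGPermMatrix P₁ ∧ IsGPermMatrix P₄ ∧ P = Matrix.fromBlocks P₁ 0 0 P₄) ∨
       (∃ (P₂ : Matrix (Fin m × Fin p) (Fin n × Fin p) ℝ)
          (P₃ : Matrix (Fin n × Fin q) (Fin m × Fin q) ℝ),
          IsGPermMatrix P₂ ∧ IsGPermMatrix P₃ ∧ P = Matrix.fromBlocks 0 P₂ P₃ 0)) ∧
      Pᵀ * (Matrix.fromBlocks 0 (V ⊗ₖ B) (Vᵀ ⊗ₖ Bᵀ) 0) * P =
        Matrix.fromBlocks 0 (V ⊗ₖ Bᵀ) (Vᵀ ⊗ₖ B) 0) :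
    IsPET V ∨ IsPET B := by
  classical
  rcases Nat.eq_zero_or_pos m with hm | hm
  · left
    subst hm
    have hn : n = 0 := by
      by_contra hn
      obtain ⟨i, -⟩ := hVc ⟨0, Nat.pos_of_ne_zero hn⟩
      exact i.elim0
    subst hn
    exact isPET_of_equiv V (Equiv.refl _) (Equiv.refl _) (fun u _ => u.elim0)
  rcases Nat.eq_zero_or_pos p with hp | hp
  · right
    subst hp
    have hq : q = 0 := by
      by_contra hq
      obtain ⟨i, -⟩ := hBc ⟨0, Nat.pos_of_ne_zero hq⟩
      exact i.elim0
    subst hq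
    exact isPET_of_equiv B (Equiv.refl _) (Equiv.refl _) (fun u _ => u.elim0)
  have hV1 : ∃ i j, matRel V i j := ⟨⟨0, hm⟩, hVr ⟨0, hm⟩⟩
  have hB1 : ∃ i j, matRel B i j := ⟨⟨0, hp⟩, hBr ⟨0, hp⟩⟩
  have hVT01 : ∀ i j, Vᵀ i j = 0 ∨ Vᵀ i j = 1 := fun i j => hV01 j i
  have hBT01 : ∀ i j, Bᵀ i j = 0 ∨ Bᵀ i j = 1 := fun i j => hB01 j i
  obtain ⟨P, hform, heq⟩ := h
  rcases hform with ⟨P₁, P₄, ⟨e₁, he₁⟩, ⟨e₄, he₄⟩, rfl⟩ | ⟨P₂, P₃, ⟨e₂, he₂⟩, ⟨e₃, he₃⟩, rfl⟩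
  · -- block-diagonal case: B is PET
    right
    have hblock : P₁ᵀ * (V ⊗ₖ B) * P₄ = V ⊗ₖ Bᵀ := by
      have h12 := congrArg Matrix.toBlocks₁₂ heq
      simp only [Matrix.fromBlocks_transpose, Matrix.transpose_zero,
        Matrix.fromBlocks_multiply, Matrix.zero_mul, Matrix.mul_zero, add_zero, zero_add,
        Matrix.toBlocks_fromBlocks₁₂] at h12
      exact h12
    have hentry : ∀ u v, (V ⊗ₖ Bᵀ) u v = (V ⊗ₖ B) (e₁.symm u) (e₄.symm v) :=
      conj_perm_apply _ _ _ _ e₁ e₄ he₁ he₄ hblock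
    have Hhom : ∀ (α β : Type) [Fintype α] [Fintype β] (R : α → β → Prop),
        homCount R (matRel B) = homCount R (matRel Bᵀ) := by
      intro α β _ _ R
      have key : homCount R (fun (x : Fin m × Fin q) (y : Fin n × Fin p) =>
            matRel V x.1 y.1 ∧ matRel Bᵀ x.2 y.2) =
          homCount R (fun (x : Fin m × Fin p) (y : Fin n × Fin q) =>
            matRel V x.1 y.1 ∧ matRel B x.2 y.2) := by
        apply homCount_congr_target e₁.symm e₄.symm
        intro x y
        rw [← kron_rel_iff V Bᵀ hV01 hBT01, ← kron_rel_iff V B hV01 hB01]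
        unfold matRel
        rw [hentry]
      rw [homCount_prod, homCount_prod] at key
      have hpos : 0 < homCount R (matRel V) := homCount_pos hV1
      exact Nat.eq_of_mul_eq_mul_left hpos key.symm
    obtain ⟨e, f, hiff⟩ := iso_of_homCount_eq (matRel B) (matRel Bᵀ) Hhom
    apply isPET_of_equiv B e f
    intro u v
    exact eq01_of_iff (hB01 u v) (hB01 (f v) (e u)) (hiff u v)
  · -- block-anti-diagonal case: V is PET
    left
    have hblock : P₂ᵀ * (V ⊗ₖ B) * P₃ = Vᵀ ⊗ₖ B := by
      have h21 := congrArg Matrix.toBlocks₂₁ heq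
      simp only [Matrix.fromBlocks_transpose, Matrix.transpose_zero,
        Matrix.fromBlocks_multiply, Matrix.zero_mul, Matrix.mul_zero, add_zero, zero_add,
        Matrix.toBlocks_fromBlocks₂₁] at h21
      exact h21
    have hentry : ∀ u v, (Vᵀ ⊗ₖ B) u v = (V ⊗ₖ B) (e₂.symm u) (e₃.symm v) :=
      conj_perm_apply _ _ _ _ e₂ e₃ he₂ he₃ hblock
    have Hhom : ∀ (α β : Type) [Fintype α] [Fintype β] (R : α → β → Prop),
        homCount R (matRel V) = homCount R (matRel Vᵀ) := by
      intro α β _ _ R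
      have key : homCount R (fun (x : Fin n × Fin p) (y : Fin m × Fin q) =>
            matRel Vᵀ x.1 y.1 ∧ matRel B x.2 y.2) =
          homCount R (fun (x : Fin m × Fin p) (y : Fin n × Fin q) =>
            matRel V x.1 y.1 ∧ matRel B x.2 y.2) := by
        apply homCount_congr_target e₂.symm e₃.symm
        intro x y
        rw [← kron_rel_iff Vᵀ B hVT01 hB01, ← kron_rel_iff V B hV01 hB01]
        unfold matRel
        rw [hentry]
      rw [homCount_prod, homCount_prod] at key
      have hpos : 0 < homCount R (matRel B) := homCount_pos hB1
      exact Nat.eq_of_mul_eq_mul_right hpos key.symm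
    obtain ⟨e, f, hiff⟩ := iso_of_homCount_eq (matRel V) (matRel Vᵀ) Hhom
    apply isPET_of_equiv V e f
    intro u v
    exact eq01_of_iff (hV01 u v) (hV01 (f v) (e u)) (hiff u v)
end
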